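/- arXiv:0812.1032 — 6 statements merged into one kernel-verified Lean document; each statement's English description precedes it below -/
import Mathlib

section
/- Let C ⊂ ℝ^n be a bounded open convex set. If the Hilbert geometry (C, d_C) admits a quasi-isometric embedding into some finite-dimensional normed vector space, then C is the interior of a convex polytope (the convex hull of finitely many points). -/
/-!
Fix `x₀ ∈ C`. Pushing `k` exposed points `e` of `closure C` towards `x₀` to
`σ • x₀ + (1 - σ) • e` with `σ = exp (-2 * T)` gives `k` points at Hilbert distance `T + O(1)`
from `x₀` and at least `T - O(1)` from each other: the hyperplane exposing `e` meets
`closure C` only at `e`, and the Hilbert distance dominates half the log of the ratio of the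
distances to a supporting hyperplane. A quasi-isometric embedding maps these points into a ball
of radius about `A * T` with mutual distances at least about `T / A`; by compactness of balls in
a finite-dimensional normed space, this bounds `k` in terms of `A` alone. So `closure C` has
finitely many exposed points, and a compact convex set with finitely many exposed points is
their convex hull, because its point farthest from a remote point is exposed.
-/

open Classical

/-- The Hilbert distance of a convex domain `C`: for `p ≠ q`, the line through `p` and `q`
meets `∂C` at `a = p + t⁻ • (q - p)` and `b = p + t⁺ • (q - p)` where `t⁻ = sInf` and
`t⁺ = sSup` of the chord parameter set, so that the cross-ratio
`[a,p,q,b] = (‖q-a‖/‖p-a‖)·(‖p-b‖/‖q-b‖)` equals `((1-t⁻)/(-t⁻))·(t⁺/(t⁺-1))`,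
and `d_C(p,q) = (1/2)·log [a,p,q,b]`. -/
noncomputable def hilbertDist {E : Type*} [NormedAddCommGroup E] [NormedSpace ℝ E]
    (C : Set E) (p q : E) : ℝ :=
  if p = q then 0
  else ((1 : ℝ) / 2) * Real.log
    (((1 - sInf {t : ℝ | p + t • (q - p) ∈ C}) / (-sInf {t : ℝ | p + t • (q - p) ∈ C})) *
      (sSup {t : ℝ | p + t • (q - p) ∈ C} / (sSup {t : ℝ | p + t • (q - p) ∈ C} - 1)))

/-- `ν` is a norm on the real vector space `V`. -/
def IsNormOn (V : Type*) [AddCommGroup V] [Module ℝ V] (ν : V → ℝ) : Prop :=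
  (∀ x : V, 0 ≤ ν x) ∧ (∀ x : V, ν x = 0 → x = 0) ∧
    (∀ (c : ℝ) (x : V), ν (c • x) = |c| * ν x) ∧ ∀ x y : V, ν (x + y) ≤ ν x + ν y

open Set Filter Topology Metric Real
open scoped RealInnerProductSpace

namespace IsNormOn

variable {V : Type*} [NormedAddCommGroup V] [NormedSpace ℝ V] {ν : V → ℝ}

lemma map_zero (hν : IsNormOn V ν) : ν 0 = 0 := by
  simpa using hν.2.2.1 0 0

lemma map_neg (hν : IsNormOn V ν) (v : V) : ν (-v) = ν v := by
  simpa using hν.2.2.1 (-1) v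

lemma sub_le_add (hν : IsNormOn V ν) (a b y : V) : ν (a - b) ≤ ν (a - y) + ν (b - y) := by
  simpa [← hν.map_neg (b - y)] using hν.2.2.2 (a - y) (-(b - y))

lemma convexOn (hν : IsNormOn V ν) : ConvexOn ℝ univ ν := by
  refine ⟨convex_univ, fun x _ y _ a b ha hb _ => ?_⟩
  calc ν (a • x + b • y) ≤ ν (a • x) + ν (b • y) := hν.2.2.2 _ _
    _ = a • ν x + b • ν y := by
      rw [hν.2.2.1, hν.2.2.1, abs_of_nonneg ha, abs_of_nonneg hb, smul_eq_mul, smul_eq_mul]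

variable [FiniteDimensional ℝ V]

lemma continuous (hν : IsNormOn V ν) : Continuous ν :=
  hν.convexOn.locallyLipschitz.continuous

lemma exists_pos_mul_norm_le (hν : IsNormOn V ν) : ∃ c > 0, ∀ v, c * ‖v‖ ≤ ν v := by
  rcases subsingleton_or_nontrivial V with hV | hV
  · exact ⟨1, one_pos, fun v => by simpa [Subsingleton.elim v 0] using hν.1 0⟩
  obtain ⟨v₀, hv₀, hmin⟩ := (isCompact_sphere (0 : V) 1).exists_isMinOn
    (NormedSpace.sphere_nonempty.2 zero_le_one) hν.continuous.continuousOn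
  have hv₀0 : v₀ ≠ 0 := ne_zero_of_mem_unit_sphere ⟨v₀, hv₀⟩
  refine ⟨ν v₀, (hν.1 v₀).lt_of_ne fun h => hv₀0 (hν.2.1 v₀ h.symm), fun v => ?_⟩
  rcases eq_or_ne v 0 with rfl | hv
  · simpa using hν.1 0
  have hvpos : 0 < ‖v‖ := norm_pos_iff.2 hv
  have h := hmin (a := ‖v‖⁻¹ • v) (by simp [norm_smul, hvpos.ne'])
  rw [mem_ofPred_eq, hν.2.2.1, abs_of_pos (inv_pos.2 hvpos), le_inv_mul_iff₀ hvpos] at h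
  linarith

lemma isCompact_le (hν : IsNormOn V ν) (r : ℝ) : IsCompact {v | ν v ≤ r} := by
  obtain ⟨c, hc, hle⟩ := hν.exists_pos_mul_norm_le
  refine isCompact_of_isClosed_isBounded (isClosed_le hν.continuous continuous_const) ?_
  refine (isBounded_closedBall (x := 0) (r := r / c)).subset fun v hv => ?_
  rw [mem_closedBall_zero_iff, le_div_iff₀ hc, mul_comm]
  exact (hle v).trans hv

lemma exists_card_le_of_separated (hν : IsNormOn V ν) {ε : ℝ} (hε : 0 < ε) (ι : Type*) :
    ∃ N : ℕ, ∀ (s : Finset ι) (w : ι → V) (ρ : ℝ), 0 < ρ → (∀ i ∈ s, ν (w i) ≤ ρ) →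
      (∀ i ∈ s, ∀ j ∈ s, i ≠ j → ε * ρ ≤ ν (w i - w j)) → s.card ≤ N := by
  have hopen (y : V) : IsOpen {v | ν (v - y) < ε / 2} :=
    isOpen_lt (hν.continuous.comp (continuous_id.sub continuous_const)) continuous_const
  obtain ⟨t, -, hcover⟩ := (hν.isCompact_le 1).elim_nhds_subcover
    (fun y => {v | ν (v - y) < ε / 2}) fun y _ => (hopen y).mem_nhds (by simp [hν.map_zero, hε])
  refine ⟨t.card, fun s w ρ hρ hw hsep => ?_⟩
  have hnear (i : ι) (hi : i ∈ s) : ∃ y ∈ t, ν (ρ⁻¹ • w i - y) < ε / 2 := by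
    have hmem : ρ⁻¹ • w i ∈ {v | ν v ≤ 1} := by
      rw [mem_ofPred_eq, hν.2.2.1, abs_of_pos (inv_pos.2 hρ), inv_mul_le_one₀ hρ]
      exact hw i hi
    simpa using hcover hmem
  choose! g hgt hg using hnear
  refine Finset.card_le_card_of_injOn g hgt fun i hi j hj hgij => ?_
  by_contra hij
  have hfar : ε ≤ ν (ρ⁻¹ • w i - ρ⁻¹ • w j) := by
    rw [← smul_sub, hν.2.2.1, abs_of_pos (inv_pos.2 hρ), le_inv_mul_iff₀ hρ, mul_comm]
    exact hsep i hi j hj hij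
  have hclose := hν.sub_le_add (ρ⁻¹ • w i) (ρ⁻¹ • w j) (g i)
  linarith [hg i hi, hgij ▸ hg j hj]

lemma exists_card_le_of_quasiIsometric (hν : IsNormOn V ν) {X : Type*} {d : X → X → ℝ}
    {S : Set X} {f : X → V} {A B : ℝ} (hA : 0 < A)
    (hqi : ∀ x ∈ S, ∀ y ∈ S,
      (1 / A) * d x y - B ≤ ν (f x - f y) ∧ ν (f x - f y) ≤ A * d x y + B) (ι : Type*) :
    ∃ N : ℕ, ∀ (s : Finset ι) (x₀ : X) (c : ℝ), x₀ ∈ S →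
      (∀ T ≥ 1, ∃ x : ι → X, (∀ i ∈ s, x i ∈ S ∧ d (x i) x₀ ≤ T + c) ∧
        ∀ i ∈ s, ∀ j ∈ s, i ≠ j → T - c ≤ d (x i) (x j)) → s.card ≤ N := by
  obtain ⟨N, hN⟩ := hν.exists_card_le_of_separated (ε := 1 / (4 * A ^ 2)) (by positivity) ι
  refine ⟨N, fun s x₀ c hx₀ hspread => ?_⟩
  -- large enough that `(A * (T + c) + B) / (4 * A ^ 2) ≤ (T - c) / A - B`
  set T := (5 * A * |c| + 4 * A ^ 2 * |B| + |B| + A) / A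
  have hAT : A * T = 5 * A * |c| + 4 * A ^ 2 * |B| + |B| + A := mul_div_cancel₀ _ hA.ne'
  have hT : 1 ≤ T := by
    rw [← mul_le_mul_iff_right₀ hA, hAT]
    nlinarith [abs_nonneg c, abs_nonneg B]
  obtain ⟨x, hxS, hsep⟩ := hspread T hT
  refine hN s (fun i => f (x i) - f x₀) (A * (T + c) + B) ?_ (fun i hi => ?_)
    fun i hi j hj hij => ?_
  · nlinarith [le_abs_self c, neg_abs_le c, le_abs_self B, neg_abs_le B]
  · nlinarith [(hqi _ (hxS i hi).1 x₀ hx₀).2, (hxS i hi).2]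
  · have hlow := (hqi _ (hxS i hi).1 _ (hxS j hj).1).1
    have hd := hsep i hi j hj hij
    have hexpand :
        4 * A ^ 2 * (1 / A * (T - c) - B) = 4 * (A * T) - 4 * A * c - 4 * A ^ 2 * B := by
      field_simp
    have hgap : A * (T + c) + B ≤ 4 * A ^ 2 * (1 / A * (T - c) - B) := by
      rw [hexpand]
      nlinarith [le_abs_self c, neg_abs_le c, le_abs_self B, neg_abs_le B]
    calc 1 / (4 * A ^ 2) * (A * (T + c) + B) ≤ 1 / A * (T - c) - B := by
          rw [one_div_mul_eq_div, div_le_iff₀' (by positivity)]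
          exact hgap
      _ ≤ 1 / A * d (x i) (x j) - B := by gcongr
      _ ≤ ν (f (x i) - f (x j)) := hlow
      _ = ν (f (x i) - f x₀ - (f (x j) - f x₀)) := by rw [sub_sub_sub_cancel_right]

end IsNormOn

lemma Convex.combo_mem_of_mem_interior {E : Type*} [NormedAddCommGroup E] [NormedSpace ℝ E]
    {C : Set E} (hconv : Convex ℝ C) {x₀ e : E} (hx₀ : x₀ ∈ interior C) (he : e ∈ closure C)
    {σ : ℝ} (hσ0 : 0 < σ) (hσ1 : σ ≤ 1) : σ • x₀ + (1 - σ) • e ∈ C :=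
  interior_subset (hconv.combo_interior_closure_mem_interior hx₀ he hσ0 (by linarith) (by ring))

section HilbertDist

variable {E : Type*} [NormedAddCommGroup E] [NormedSpace ℝ E] {C : Set E} {p q : E}

def chordParams (C : Set E) (p q : E) : Set ℝ := {t | p + t • (q - p) ∈ C}

lemma hilbertDist_of_ne (h : p ≠ q) :
    hilbertDist C p q = 1 / 2 * log ((1 - sInf (chordParams C p q)) / -sInf (chordParams C p q) *
      (sSup (chordParams C p q) / (sSup (chordParams C p q) - 1))) := by
  rw [hilbertDist, if_neg h]
  rfl

lemma isBounded_chordParams (hC : Bornology.IsBounded C) (h : p ≠ q) :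
    Bornology.IsBounded (chordParams C p q) := by
  have hqp : 0 < ‖q - p‖ := norm_pos_iff.2 (sub_ne_zero.2 h.symm)
  refine (AntilipschitzWith.of_le_mul_dist (K := ‖q - p‖₊⁻¹) fun s t => ?_).isBounded_preimage hC
  rw [dist_add_left, dist_eq_norm, dist_eq_norm, ← sub_smul, norm_smul, NNReal.coe_inv,
    coe_nnnorm, mul_comm, mul_inv_cancel_right₀ hqp.ne']

lemma isOpen_chordParams (hC : IsOpen C) : IsOpen (chordParams C p q) :=
  hC.preimage (by fun_prop)

lemma sInf_chordParams_neg (hC : IsOpen C) (hb : Bornology.IsBounded C) (hp : p ∈ C) (h : p ≠ q) :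
    sInf (chordParams C p q) < 0 := by
  obtain ⟨t, ht0, ht⟩ := ((frequently_lt_nhds 0).and_eventually
    ((isOpen_chordParams hC).mem_nhds (by simpa [chordParams] using hp))).exists
  exact (csInf_le (isBounded_chordParams hb h).bddBelow ht).trans_lt ht0

lemma one_lt_sSup_chordParams (hC : IsOpen C) (hb : Bornology.IsBounded C) (hq : q ∈ C)
    (h : p ≠ q) : 1 < sSup (chordParams C p q) := by
  obtain ⟨t, ht1, ht⟩ := ((frequently_gt_nhds 1).and_eventually
    ((isOpen_chordParams hC).mem_nhds (by simpa [chordParams] using hq))).exists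
  exact ht1.trans_le (le_csSup (isBounded_chordParams hb h).bddAbove ht)

lemma log_div_le_hilbertDist (hC : IsOpen C) (hb : Bornology.IsBounded C) (hp : p ∈ C)
    (hq : q ∈ C) (l : StrongDual ℝ E) {c : ℝ} (hlc : ∀ x ∈ C, l x < c) :
    1 / 2 * log ((c - l q) / (c - l p)) ≤ hilbertDist C p q := by
  have hlp := sub_pos.2 (hlc p hp)
  have hlq := sub_pos.2 (hlc q hq)
  rcases eq_or_ne p q with rfl | h
  · simp [hilbertDist, div_self hlp.ne']
  set S := chordParams C p q
  have hI := sInf_chordParams_neg hC hb hp h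
  have hT := one_lt_sSup_chordParams hC hb hq h
  -- the chord endpoint `p + sInf S • (q - p)` lies in `closure C ⊆ {x | l x ≤ c}`
  have hIc : sInf S ∈ {t : ℝ | l (p + t • (q - p)) ≤ c} :=
    closure_minimal (show S ⊆ {t : ℝ | l (p + t • (q - p)) ≤ c} from fun t ht => (hlc _ ht).le)
      (isClosed_le (by fun_prop) continuous_const)
      (csInf_mem_closure ⟨0, by simpa [S, chordParams] using hp⟩
        (isBounded_chordParams hb h).bddBelow)
  rw [mem_ofPred_eq, map_add, map_smul, map_sub, smul_eq_mul] at hIc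
  have h₁ : (c - l q) / (c - l p) ≤ (1 - sInf S) / -sInf S := by
    rw [div_le_div_iff₀ hlp (by linarith)]
    nlinarith
  have h₂ : 1 ≤ sSup S / (sSup S - 1) := by
    rw [le_div_iff₀ (by linarith)]
    linarith
  have hprod := mul_le_mul h₁ h₂ zero_le_one (div_nonneg (by linarith) (by linarith))
  rw [mul_one] at hprod
  rw [hilbertDist_of_ne h]
  gcongr

lemma hilbertDist_le_of_mem (hb : Bornology.IsBounded C) (h : p ≠ q) {a b : ℝ} (ha0 : 0 < a)
    (hb0 : 0 < b) (hpa : p - a • (q - p) ∈ C) (hqb : q + b • (q - p) ∈ C) :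
    hilbertDist C p q ≤ 1 / 2 * log ((1 + 1 / a) * (1 + 1 / b)) := by
  set S := chordParams C p q
  have hS := isBounded_chordParams hb h
  have hI : sInf S ≤ -a := csInf_le hS.bddBelow (by simpa [S, chordParams, ← sub_eq_add_neg])
  have hT : 1 + b ≤ sSup S := le_csSup hS.bddAbove (by
    simpa [S, chordParams, add_smul, ← add_assoc] using hqb)
  have h₁ : (1 - sInf S) / -sInf S ≤ 1 + 1 / a :=
    calc (1 - sInf S) / -sInf S = 1 + 1 / -sInf S := by
          rw [one_add_div (by linarith), neg_add_eq_sub]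
      _ ≤ 1 + 1 / a := by gcongr; linarith
  have h₂ : sSup S / (sSup S - 1) ≤ 1 + 1 / b :=
    calc sSup S / (sSup S - 1) = 1 + 1 / (sSup S - 1) := by
          rw [one_add_div (by linarith), sub_add_cancel]
      _ ≤ 1 + 1 / b := by gcongr; linarith
  rw [hilbertDist_of_ne h]
  refine mul_le_mul_of_nonneg_left (log_le_log ?_ ?_) (by norm_num)
  · exact mul_pos (div_pos (by linarith) (by linarith)) (div_pos (by linarith) (by linarith))
  · exact mul_le_mul h₁ h₂ (div_pos (by linarith) (by linarith)).le (by positivity)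

lemma hilbertDist_combo_le (hconv : Convex ℝ C) {x₀ e : E} {δ D σ : ℝ} (hδ : 0 < δ)
    (hball : ball x₀ δ ⊆ C) (hD : C ⊆ closedBall x₀ D) (he : e ∈ closure C) (hex : e ≠ x₀)
    (hσ0 : 0 < σ) (hσ1 : σ < 1) :
    hilbertDist C (σ • x₀ + (1 - σ) • e) x₀ ≤
      1 / 2 * log (1 / σ) + 1 / 2 * log (3 + 6 * D / δ) := by
  have hx₀ : x₀ ∈ interior C := interior_maximal hball isOpen_ball (mem_ball_self hδ)
  set p := σ • x₀ + (1 - σ) • e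
  have hpD : ‖x₀ - p‖ ≤ D := by
    simpa [dist_eq_norm'] using hD (hconv.combo_mem_of_mem_interior hx₀ he hσ0 hσ1.le)
  have hpx : p ≠ x₀ := by
    intro h
    have : (1 - σ) • (e - x₀) = 0 := by rw [← sub_eq_zero.2 h]; simp only [p]; module
    exact hex (sub_eq_zero.1 ((smul_eq_zero.1 this).resolve_left (by linarith)))
  have hD0 : 0 < D := (norm_pos_iff.2 (sub_ne_zero.2 hpx.symm)).trans_le hpD
  -- the chord from `p` through `x₀` extends by `σ / 2` backwards (still a convex combination
  -- of `x₀` and `e`) and by `δ / (2 * D)` forwards (still inside `ball x₀ δ`)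
  have hback : p - (σ / 2) • (x₀ - p) ∈ C := by
    have : p - (σ / 2) • (x₀ - p) = (σ * (1 + σ) / 2) • x₀ + (1 - σ * (1 + σ) / 2) • e := by
      simp only [p]
      module
    rw [this]
    exact hconv.combo_mem_of_mem_interior hx₀ he (by positivity) (by nlinarith)
  have hfwd : x₀ + (δ / (2 * D)) • (x₀ - p) ∈ C := by
    apply hball
    rw [mem_ball, dist_eq_norm, add_sub_cancel_left, norm_smul, norm_of_nonneg (by positivity)]
    calc δ / (2 * D) * ‖x₀ - p‖ ≤ δ / (2 * D) * D := by gcongr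
      _ < δ := by field_simp; linarith
  have hprod : (1 + 1 / (σ / 2)) * (1 + 1 / (δ / (2 * D))) ≤ 1 / σ * (3 + 6 * D / δ) :=
    calc (1 + 1 / (σ / 2)) * (1 + 1 / (δ / (2 * D))) = (1 + 2 / σ) * (1 + 2 * D / δ) := by
          rw [one_div_div, one_div_div]
      _ ≤ 3 / σ * (1 + 2 * D / δ) := by
          gcongr
          rw [le_div_iff₀ hσ0, add_mul, div_mul_cancel₀ _ hσ0.ne']
          linarith
      _ = 1 / σ * (3 + 6 * D / δ) := by ring
  refine (hilbertDist_le_of_mem (isBounded_closedBall.subset hD) hpx (by positivity)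
    (by positivity) hback hfwd).trans ?_
  rw [← mul_add, ← log_mul (by positivity) (by positivity)]
  exact mul_le_mul_of_nonneg_left (log_le_log (by positivity) hprod) (by norm_num)

lemma sub_log_le_hilbertDist_combo (hC : IsOpen C) (hconv : Convex ℝ C)
    (hb : Bornology.IsBounded C) {x₀ e e' : E} (hx₀ : x₀ ∈ C) (he : e ∈ closure C)
    (he' : e' ∈ closure C) (l : StrongDual ℝ E) (hlC : ∀ x ∈ C, l x < l e) (hle' : l e' < l e)
    {σ : ℝ} (hσ0 : 0 < σ) (hσ : σ ≤ 1 / 2) :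
    1 / 2 * log (1 / σ) - 1 / 2 * log (2 * (l e - l x₀) / (l e - l e')) ≤
      hilbertDist C (σ • x₀ + (1 - σ) • e) (σ • x₀ + (1 - σ) • e') := by
  have hx₀' : x₀ ∈ interior C := by rwa [hC.interior_eq]
  have hmem {y : E} (hy : y ∈ closure C) : σ • x₀ + (1 - σ) • y ∈ C :=
    hconv.combo_mem_of_mem_interior hx₀' hy hσ0 (by linarith)
  have hlow := log_div_le_hilbertDist hC hb (hmem he) (hmem he') l hlC
  have hx₀e : 0 < l e - l x₀ := sub_pos.2 (hlC x₀ hx₀)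
  have he'e : 0 < l e - l e' := sub_pos.2 hle'
  have hlP : l e - l (σ • x₀ + (1 - σ) • e) = σ * (l e - l x₀) := by
    simp only [map_add, map_smul, smul_eq_mul]
    ring
  have hlQ : l e - l (σ • x₀ + (1 - σ) • e') = σ * (l e - l x₀) + (1 - σ) * (l e - l e') := by
    simp only [map_add, map_smul, smul_eq_mul]
    ring
  -- `l e - l ·` shrinks by the factor `σ` near `e` but stays `≥ (l e - l e') / 2` near `e'`
  rw [hlP, hlQ] at hlow
  have hratio : 1 / σ ≤ 2 * (l e - l x₀) / (l e - l e') *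
      ((σ * (l e - l x₀) + (1 - σ) * (l e - l e')) / (σ * (l e - l x₀))) := by
    rw [div_mul_div_comm, div_le_div_iff₀ hσ0 (by positivity)]
    nlinarith [mul_pos (mul_pos hx₀e he'e) hσ0, mul_pos (mul_pos hx₀e hx₀e) (mul_pos hσ0 hσ0)]
  have hQ : 0 < σ * (l e - l x₀) + (1 - σ) * (l e - l e') := by nlinarith
  have hlog := log_le_log (by positivity) hratio
  rw [log_mul (div_pos (by positivity) he'e).ne' (div_pos hQ (by positivity)).ne'] at hlog
  linarith

end HilbertDist

section ExposedPoints

variable {F : Type*} [NormedAddCommGroup F] [InnerProductSpace ℝ F] {K : Set F}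

lemma mem_exposedPoints_of_isMaxOn_norm_sub {y e : F} (he : e ∈ K)
    (hmax : IsMaxOn (fun x => ‖x - y‖) K e) : e ∈ K.exposedPoints ℝ := by
  refine ⟨he, innerSL ℝ (e - y), fun x hx => ?_⟩
  have hsq : ‖x - y‖ ^ 2 ≤ ‖e - y‖ ^ 2 := pow_le_pow_left₀ (norm_nonneg _) (hmax hx) 2
  have hexp : ‖x - y‖ ^ 2 = ‖x - e‖ ^ 2 + 2 * ⟪e - y, x - e⟫ + ‖e - y‖ ^ 2 := by
    rw [← sub_add_sub_cancel x e y, norm_add_sq_real, real_inner_comm]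
  rw [inner_sub_right] at hexp
  simp only [innerSL_apply_apply]
  refine ⟨by nlinarith [sq_nonneg ‖x - e‖], fun h => ?_⟩
  have : ‖x - e‖ ^ 2 = 0 := le_antisymm (by nlinarith) (sq_nonneg _)
  rwa [sq_eq_zero_iff, norm_eq_zero, sub_eq_zero] at this

lemma exists_mem_exposedPoints_inner_gt (hK : IsCompact K) {z : F} (hz : z ∈ K) (u : F)
    {ε : ℝ} (hε : 0 < ε) : ∃ e ∈ K.exposedPoints ℝ, ⟪u, z⟫ - ε < ⟪u, e⟫ := by
  obtain ⟨r, hr⟩ := hK.isBounded.subset_closedBall z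
  -- a point of `K` farthest from `z - R • u`, with `R` large, almost maximizes `⟪u, ·⟫`
  set R := r ^ 2 / (2 * ε) + 1
  have hR : 0 < R := by positivity
  obtain ⟨e, heK, hmax⟩ := hK.exists_isMaxOn ⟨z, hz⟩
    (continuous_id.sub (continuous_const (y := z - R • u))).norm.continuousOn
  refine ⟨e, mem_exposedPoints_of_isMaxOn_norm_sub heK hmax, ?_⟩
  have hfar : ‖z - (z - R • u)‖ ^ 2 ≤ ‖e - (z - R • u)‖ ^ 2 :=
    pow_le_pow_left₀ (norm_nonneg _) (hmax hz) 2
  rw [sub_sub_cancel, show e - (z - R • u) = (e - z) + R • u by abel, norm_add_sq_real,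
    inner_smul_right, norm_smul, norm_of_nonneg hR.le, real_inner_comm, inner_sub_right] at hfar
  have hez : ‖e - z‖ ^ 2 ≤ r ^ 2 := by
    have := mem_closedBall_iff_norm.1 (hr heK)
    gcongr
  have hRε : r ^ 2 < 2 * R * ε := by
    have : 2 * R * ε = r ^ 2 + 2 * ε := by simp only [R]; field_simp
    linarith
  nlinarith

variable [CompleteSpace F]

theorem convexHull_exposedPoints_eq_of_finite (hK : IsCompact K) (hKc : Convex ℝ K)
    (hfin : (K.exposedPoints ℝ).Finite) : convexHull ℝ (K.exposedPoints ℝ) = K := by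
  refine (convexHull_min exposedPoints_subset hKc).antisymm fun z hz => ?_
  by_contra hzP
  obtain ⟨g, a, hgP, hgz⟩ :=
    geometric_hahn_banach_closed_point (convex_convexHull ℝ _) (hfin.isClosed_convexHull ℝ) hzP
  obtain ⟨e, he, hge⟩ := exists_mem_exposedPoints_inner_gt hK hz
    ((InnerProductSpace.toDual ℝ F).symm g) (sub_pos.2 hgz)
  rw [InnerProductSpace.toDual_symm_apply, InnerProductSpace.toDual_symm_apply] at hge
  linarith [hgP e (subset_convexHull ℝ _ he)]

end ExposedPoints

section Finiteness

variable {E : Type*} [NormedAddCommGroup E] [NormedSpace ℝ E] {C : Set E}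

lemma notMem_of_mem_exposedPoints_closure (hC : IsOpen C) (hK : ¬(closure C).Subsingleton)
    {e : E} (he : e ∈ (closure C).exposedPoints ℝ) : e ∉ C := by
  intro heC
  obtain ⟨-, l, hl⟩ := he
  have hl0 : l = 0 := IsLocalMax.hasFDerivAt_eq_zero
    (mem_of_superset (hC.mem_nhds heC) fun y hy => (hl y (subset_closure hy)).1) l.hasFDerivAt
  exact hK (subsingleton_singleton.anti fun y hy => (hl y hy).2 (by simp [hl0]))

lemma exists_spread_of_subset_exposedPoints (hC : IsOpen C) (hconv : Convex ℝ C)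
    (hb : Bornology.IsBounded C) {x₀ : E} (hx₀ : x₀ ∈ C) {s : Finset E}
    (hs : ↑s ⊆ (closure C).exposedPoints ℝ) (hsC : ∀ e ∈ s, e ∉ C) :
    ∃ c : ℝ, ∀ T ≥ 1, ∃ x : E → E, (∀ e ∈ s, x e ∈ C ∧ hilbertDist C (x e) x₀ ≤ T + c) ∧
      ∀ e ∈ s, ∀ e' ∈ s, e ≠ e' → T - c ≤ hilbertDist C (x e) (x e') := by
  obtain ⟨δ, hδ, hball⟩ := isOpen_iff.1 hC x₀ hx₀
  obtain ⟨D, hD⟩ := hb.subset_closedBall x₀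
  have hx₀' : x₀ ∈ interior C := by rwa [hC.interior_eq]
  have hexp (e : E) (he : e ∈ s) : ∃ l : StrongDual ℝ E, ∀ y ∈ closure C, y ≠ e → l y < l e := by
    obtain ⟨-, l, hl⟩ := hs he
    exact ⟨l, fun y hy hye => lt_of_not_ge fun h => hye ((hl y hy).2 h)⟩
  choose! l hl using hexp
  have hlC (e : E) (he : e ∈ s) (x : E) (hx : x ∈ C) : l e x < l e e :=
    hl e he x (subset_closure hx) fun h => hsC e he (h ▸ hx)
  obtain ⟨c₁, hc₁⟩ := ((s ×ˢ s).image fun ee' : E × E =>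
    1 / 2 * log (2 * (l ee'.1 ee'.1 - l ee'.1 x₀) / (l ee'.1 ee'.1 - l ee'.1 ee'.2))).exists_le
  refine ⟨max c₁ (1 / 2 * log (3 + 6 * D / δ)), fun T hT => ?_⟩
  set σ := exp (-(2 * T))
  have hσ0 : 0 < σ := exp_pos _
  have hσ : σ ≤ 1 / 2 := ((exp_le_exp.2 (by linarith)).trans_lt exp_neg_one_lt_half).le
  have hσT : 1 / 2 * log (1 / σ) = T := by
    rw [one_div σ, log_inv, log_exp]
    ring
  refine ⟨fun e => σ • x₀ + (1 - σ) • e, fun e he => ⟨?_, ?_⟩, fun e he e' he' hee' => ?_⟩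
  · exact hconv.combo_mem_of_mem_interior hx₀' (hs he).1 hσ0 (by linarith)
  · have := hilbertDist_combo_le hconv hδ hball hD (hs he).1 (by rintro rfl; exact hsC e he hx₀)
      hσ0 (by linarith)
    linarith [le_max_right c₁ (1 / 2 * log (3 + 6 * D / δ))]
  · have := sub_log_le_hilbertDist_combo hC hconv hb hx₀ (hs he).1 (hs he').1 (l e) (hlC e he)
      (hl e he e' (hs he').1 hee'.symm) hσ0 hσ
    have := hc₁ _ (Finset.mem_image_of_mem _ (Finset.mk_mem_product he he'))
    linarith [le_max_left c₁ (1 / 2 * log (3 + 6 * D / δ))]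

theorem finite_exposedPoints_closure_of_quasiIsometric {V : Type*} [NormedAddCommGroup V]
    [NormedSpace ℝ V] [FiniteDimensional ℝ V] {ν : V → ℝ} (hν : IsNormOn V ν)
    (hC : IsOpen C) (hconv : Convex ℝ C) (hb : Bornology.IsBounded C) {f : E → V} {A B : ℝ}
    (hA : 0 < A) (hqi : ∀ x ∈ C, ∀ y ∈ C, (1 / A) * hilbertDist C x y - B ≤ ν (f x - f y) ∧
      ν (f x - f y) ≤ A * hilbertDist C x y + B) :
    ((closure C).exposedPoints ℝ).Finite := by
  by_cases hK : (closure C).Subsingleton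
  · exact (hK.anti exposedPoints_subset).finite
  obtain ⟨x₀, hx₀⟩ : C.Nonempty :=
    closure_nonempty_iff.1 (not_subsingleton_iff.1 hK).nonempty
  obtain ⟨N, hN⟩ := hν.exists_card_le_of_quasiIsometric hA hqi E
  by_contra hinf
  obtain ⟨s, hs, hcard⟩ := Set.Infinite.exists_subset_card_eq hinf (N + 1)
  obtain ⟨c, hc⟩ := exists_spread_of_subset_exposedPoints hC hconv hb hx₀ hs
    fun e he => notMem_of_mem_exposedPoints_closure hC hK (hs he)
  have := hN s x₀ c hx₀ hc
  omega

end Finiteness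

theorem polytope_of_quasiIsometricEmbedding_general {n : ℕ} (C : Set (EuclideanSpace ℝ (Fin n)))
    (hconv : Convex ℝ C) (hopen : IsOpen C) (hbdd : Bornology.IsBounded C)
    (m : ℕ) (ν : (Fin m → ℝ) → ℝ) (hν : IsNormOn (Fin m → ℝ) ν)
    (f : EuclideanSpace ℝ (Fin n) → (Fin m → ℝ)) (A B : ℝ) (hA : 1 ≤ A)
    (hqi : ∀ x ∈ C, ∀ y ∈ C,
      (1 / A) * hilbertDist C x y - B ≤ ν (f x - f y) ∧
        ν (f x - f y) ≤ A * hilbertDist C x y + B) :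
    ∃ V : Finset (EuclideanSpace ℝ (Fin n)),
      C = interior (convexHull ℝ (V : Set (EuclideanSpace ℝ (Fin n)))) := by
  have hfin := finite_exposedPoints_closure_of_quasiIsometric hν hopen hconv hbdd
    (by linarith) hqi
  refine ⟨hfin.toFinset, ?_⟩
  rw [hfin.coe_toFinset,
    convexHull_exposedPoints_eq_of_finite hbdd.isCompact_closure hconv.closure hfin]
  rcases C.eq_empty_or_nonempty with rfl | hne
  · simp
  · rw [hconv.interior_closure_eq_interior_of_nonempty_interior (by rwa [hopen.interior_eq]),
      hopen.interior_eq]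

/-- If the Hilbert geometry of a bounded open convex set `C ⊆ ℝⁿ` admits a
quasi-isometric embedding into some finite-dimensional normed vector space, then `C` is the
interior of a convex polytope (the convex hull of finitely many points). -/
theorem polytope_of_quasiIsometricEmbedding {n : ℕ} (C : Set (EuclideanSpace ℝ (Fin n)))
    (hconv : Convex ℝ C) (hopen : IsOpen C) (hbdd : Bornology.IsBounded C)
    (m : ℕ) (ν : (Fin m → ℝ) → ℝ) (hν : IsNormOn (Fin m → ℝ) ν)
    (f : EuclideanSpace ℝ (Fin n) → (Fin m → ℝ)) (A B : ℝ) (hA : 1 ≤ A) (hB : 0 ≤ B)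
    (hqi : ∀ x ∈ C, ∀ y ∈ C,
      (1 / A) * hilbertDist C x y - B ≤ ν (f x - f y) ∧
        ν (f x - f y) ≤ A * hilbertDist C x y + B) :
    ∃ V : Finset (EuclideanSpace ℝ (Fin n)),
      C = interior (convexHull ℝ (V : Set (EuclideanSpace ℝ (Fin n)))) :=
  polytope_of_quasiIsometricEmbedding_general C hconv hopen hbdd m ν hν f A B hA hqi
end

section
/- Let C ⊂ ℝ^n be a bounded open convex set whose Hilbert geometry (C, d_C) admits a quasi-isometric embedding into a finite-dimensional normed vector space. Then there is an integer N such that every subset X ⊂ ∂C with the property that for all distinct x, y ∈ X the segment [x, y] is not contained in ∂C satisfies Card(X) ≤ N. -/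
open Classical

/-!
Fix `o ∈ C` and push boundary points towards it, `z ↦ z + e • (o - z)`. Since `C` contains a
ball around `o` and is bounded, the pushed points are at Hilbert distance at most
`½ log (1/e) + O(1)` from `o`, uniformly in `z`. If the segment `[x, y]` meets `C`, supporting
functionals of `C` at `x` and at `y` confine the chord through the pushed points to the
parameters `[-O(e), 1 + O(e)]`, so these points are at distance at least `log (1/e) - O(1)`
from each other: pairs diverge twice as fast as rays. Through the quasi-isometric embedding,
a finite `Y ⊆ X` is mapped, for small `e`, into a ball of radius `ρ ≈ (A/2) log (1/e)` as a
`ρ / A²`-separated set, and in a finite-dimensional normed space the size of such a set is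
bounded independently of `ρ`.
-/

open Set Filter Topology Metric
open scoped NNReal

theorem Set.encard_le_of_forall_finite_subset {α : Type*} {X : Set α} {N : ℕ}
    (h : ∀ Y ⊆ X, Y.Finite → Y.encard ≤ N) : X.encard ≤ N := by
  by_contra! hlt
  obtain ⟨Y, hYX, hY⟩ := exists_subset_encard_eq (Order.add_one_le_of_lt hlt)
  have hYN := h Y hYX (finite_of_encard_eq_coe (k := N + 1) (by simpa using hY))
  rw [hY] at hYN
  exact (ENat.lt_add_one_iff (ENat.natCast_ne_top N)).2 le_rfl |>.not_ge hYN

theorem Metric.packingNumber_ne_top_of_isCompact {X : Type*} [PseudoEMetricSpace X] {ε : ℝ≥0}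
    (hε : ε ≠ 0) {A : Set X} (hA : IsCompact A) : packingNumber ε A ≠ ⊤ := by
  obtain ⟨N, -, hNfin, hN⟩ := exists_finite_isCover_of_isCompact (ε := ε / 2) (by simpa) hA
  refine ne_top_of_le_ne_top hNfin.encard_lt_top.ne ?_
  calc packingNumber ε A = packingNumber (2 * (ε / 2)) A := by rw [mul_div_cancel₀ _ two_ne_zero]
    _ ≤ externalCoveringNumber (ε / 2) A := packingNumber_two_mul_le_externalCoveringNumber _ _
    _ ≤ N.encard := hN.externalCoveringNumber_le_encard

theorem IsNormOn.exists_encard_le_of_separated {V : Type*} [AddCommGroup V] [Module ℝ V]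
    [FiniteDimensional ℝ V] {ν : V → ℝ} (hν : IsNormOn V ν) {ε : ℝ} (hε : 0 < ε) :
    ∃ N : ℕ, ∀ {ι : Type*} (S : Set ι) (v : ι → V) (v₀ : V) (ρ : ℝ), 0 < ρ →
      (∀ i ∈ S, ν (v₀ - v i) ≤ ρ) → S.Pairwise (fun i j => ε * ρ < ν (v i - v j)) →
      S.encard ≤ N := by
  obtain ⟨hν_nonneg, hν_eq_zero, hν_smul, hν_add⟩ := hν
  -- `ν` turns `V` into a finite-dimensional normed space, whose closed unit ball has a finite
  -- packing number at every scale
  let _ : Norm V := ⟨ν⟩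
  have core : NormedSpace.Core ℝ V :=
    { norm_nonneg := hν_nonneg
      norm_smul := hν_smul
      norm_triangle := hν_add
      norm_eq_zero_iff := fun x => ⟨hν_eq_zero x, fun hx => by
        subst hx; exact (by simpa using hν_smul 0 (0 : V) : ν 0 = 0)⟩ }
  let _ := NormedAddCommGroup.ofCore core
  let _ := NormedSpace.ofCore core
  have := FiniteDimensional.proper_real V
  have hfin := packingNumber_ne_top_of_isCompact (ε := ε.toNNReal) (by simpa)
    (isCompact_closedBall (0 : V) 1)
  refine ⟨(packingNumber ε.toNNReal (closedBall (0 : V) 1)).toNat,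
    fun S v v₀ ρ hρ hball hsep => ?_⟩
  set w : _ → V := fun i => ρ⁻¹ • (v i - v₀)
  have hdist (i j) : dist (w i) (w j) = ρ⁻¹ * ν (v i - v j) := by
    rw [dist_eq_norm, ← smul_sub, sub_sub_sub_cancel_right, norm_smul,
      Real.norm_of_nonneg (by positivity)]
    rfl
  have hsep' (i j) (hij : ε * ρ < ν (v i - v j)) : ε < dist (w i) (w j) := by
    rw [hdist, lt_inv_mul_iff₀ hρ, mul_comm]; exact hij
  have hinj : InjOn w S := fun i hi j hj hij => by
    by_contra hne
    have := hsep' i j (hsep hi hj hne)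
    rw [hij, dist_self] at this
    exact hε.not_gt this
  have hsub : w '' S ⊆ closedBall 0 1 := by
    rintro _ ⟨i, hi, rfl⟩
    rw [mem_closedBall, dist_zero_right, norm_smul, norm_sub_rev,
      Real.norm_of_nonneg (by positivity), inv_mul_le_iff₀ hρ, mul_one]
    exact hball i hi
  have hwsep : IsSeparated ε.toNNReal (w '' S) := by
    rintro _ ⟨i, hi, rfl⟩ _ ⟨j, hj, rfl⟩ hne
    have hne' : i ≠ j := fun h => hne (h ▸ rfl)
    have := hsep' i j (hsep hi hj hne')
    rw [edist_dist]
    exact (ENNReal.ofReal_lt_ofReal_iff (hε.trans this)).2 this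
  calc S.encard = (w '' S).encard := hinj.encard_image.symm
    _ ≤ packingNumber ε.toNNReal (closedBall (0 : V) 1) := hwsep.encard_le_packingNumber hsub
    _ = _ := (ENat.natCast_toNat hfin).symm

section Hilbert

variable {E : Type*} [NormedAddCommGroup E] [NormedSpace ℝ E] {C : Set E} {p q : E}

theorem Bornology.IsBounded.setOf_add_smul_sub_mem (hC : Bornology.IsBounded C) (hpq : p ≠ q) :
    Bornology.IsBounded {t : ℝ | p + t • (q - p) ∈ C} := by
  have hqp : 0 < ‖q - p‖ := norm_pos_iff.2 (sub_ne_zero.2 hpq.symm)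
  have : AntilipschitzWith (‖q - p‖₊⁻¹) fun t : ℝ => p + t • (q - p) :=
    AntilipschitzWith.of_le_mul_dist fun t t' => by
      rw [dist_add_left, dist_eq_norm (t • _), ← sub_smul, norm_smul, Real.norm_eq_abs,
        ← Real.dist_eq, NNReal.coe_inv, coe_nnnorm, mul_comm (dist t t'),
        inv_mul_cancel_left₀ hqp.ne']
  exact this.isBounded_preimage hC

theorem IsOpen.exists_add_smul_sub_mem_lt_zero_and_one_lt (hC : IsOpen C) (hp : p ∈ C)
    (hq : q ∈ C) : (∃ t < (0 : ℝ), p + t • (q - p) ∈ C) ∧ ∃ t > (1 : ℝ), p + t • (q - p) ∈ C := by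
  have hS : IsOpen {t : ℝ | p + t • (q - p) ∈ C} := hC.preimage (by fun_prop)
  have h0 : (0 : ℝ) ∈ {t : ℝ | p + t • (q - p) ∈ C} := by simpa using hp
  have h1 : (1 : ℝ) ∈ {t : ℝ | p + t • (q - p) ∈ C} := by simpa using hq
  refine ⟨?_, ?_⟩
  · obtain ⟨t, ht0, htS⟩ := (eventually_mem_nhdsWithin.and
      (nhdsWithin_le_nhds (hS.mem_nhds h0))).exists (f := 𝓝[<] (0 : ℝ))
    exact ⟨t, ht0, htS⟩
  · obtain ⟨t, ht1, htS⟩ := (eventually_mem_nhdsWithin.and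
      (nhdsWithin_le_nhds (hS.mem_nhds h1))).exists (f := 𝓝[>] (1 : ℝ))
    exact ⟨t, ht1, htS⟩

theorem neg_log_le_hilbertDist (hC : IsOpen C) (hp : p ∈ C) (hq : q ∈ C) (hpq : p ≠ q) {δ : ℝ}
    (hδ : 0 < δ) (hchord : ∀ t : ℝ, p + t • (q - p) ∈ C → t ∈ Icc (-δ) (1 + δ)) :
    -Real.log δ ≤ hilbertDist C p q := by
  obtain ⟨⟨t₀, ht₀, ht₀C⟩, ⟨t₁, ht₁, ht₁C⟩⟩ := hC.exists_add_smul_sub_mem_lt_zero_and_one_lt hp hq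
  set S := {t : ℝ | p + t • (q - p) ∈ C}
  have ha : -δ ≤ sInf S := le_csInf ⟨t₀, ht₀C⟩ fun t ht => (hchord t ht).1
  have ha' : sInf S < 0 := (csInf_le ⟨-δ, fun t ht => (hchord t ht).1⟩ ht₀C).trans_lt ht₀
  have hb : sSup S ≤ 1 + δ := csSup_le ⟨t₀, ht₀C⟩ fun t ht => (hchord t ht).2
  have hb' : 1 < sSup S := ht₁.trans_le (le_csSup ⟨1 + δ, fun t ht => (hchord t ht).2⟩ ht₁C)
  have h₁ : δ⁻¹ ≤ (1 - sInf S) / -sInf S := by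
    rw [inv_eq_one_div, div_le_div_iff₀ hδ (by linarith)]
    nlinarith
  have h₂ : δ⁻¹ ≤ sSup S / (sSup S - 1) := by
    rw [inv_eq_one_div, div_le_div_iff₀ hδ (by linarith)]
    nlinarith
  calc -Real.log δ = 1 / 2 * Real.log (δ⁻¹ * δ⁻¹) := by
        rw [Real.log_mul (by positivity) (by positivity), Real.log_inv]; ring
    _ ≤ 1 / 2 * Real.log ((1 - sInf S) / -sInf S * (sSup S / (sSup S - 1))) := by
        gcongr
        exact h₁.trans' (by positivity)
    _ = hilbertDist C p q := by rw [hilbertDist, if_neg hpq]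

theorem hilbertDist_le_half_log (hC : Bornology.IsBounded C) (hpq : p ≠ q) {δ₁ δ₂ : ℝ}
    (hδ₁ : 0 < δ₁) (hδ₂ : 0 < δ₂) (h₁ : p + (-δ₁) • (q - p) ∈ C) (h₂ : p + (1 + δ₂) • (q - p) ∈ C) :
    hilbertDist C p q ≤ 1 / 2 * Real.log ((1 + δ₁⁻¹) * (1 + δ₂⁻¹)) := by
  obtain ⟨hbelow, habove⟩ := isBounded_iff_bddBelow_bddAbove.1 (hC.setOf_add_smul_sub_mem hpq)
  set S := {t : ℝ | p + t • (q - p) ∈ C}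
  have ha : sInf S ≤ -δ₁ := csInf_le hbelow h₁
  have hb : 1 + δ₂ ≤ sSup S := le_csSup habove h₂
  have h₁ : (1 - sInf S) / -sInf S ≤ 1 + δ₁⁻¹ := by
    have : 1 ≤ -sInf S / δ₁ := by rw [le_div_iff₀ hδ₁]; linarith
    rw [div_le_iff₀ (by linarith), add_mul, one_mul, inv_mul_eq_div]
    linarith
  have h₂ : sSup S / (sSup S - 1) ≤ 1 + δ₂⁻¹ := by
    have : 1 ≤ (sSup S - 1) / δ₂ := by rw [le_div_iff₀ hδ₂]; linarith
    rw [div_le_iff₀ (by linarith), add_mul, one_mul, inv_mul_eq_div]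
    linarith
  rw [hilbertDist, if_neg hpq]
  gcongr
  · exact mul_pos (div_pos (by linarith) (by linarith)) (div_pos (by linarith) (by linarith))
  · exact div_nonneg (by linarith) (by linarith)

end Hilbert

section Geometry

variable {E : Type*} [NormedAddCommGroup E] [NormedSpace ℝ E] {C : Set E} {o x y w : E}

theorem Convex.add_smul_sub_mem_of_isOpen (hconv : Convex ℝ C) (hopen : IsOpen C)
    (hx : x ∈ closure C) (ho : o ∈ C) {e : ℝ} (he : e ∈ Ioc 0 1) : x + e • (o - x) ∈ C := by
  have := hconv.add_smul_sub_mem_interior' hx (by rwa [hopen.interior_eq]) he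
  rwa [hopen.interior_eq] at this

theorem exists_hilbertDist_le_neg_log (hconv : Convex ℝ C) (hopen : IsOpen C)
    (hbdd : Bornology.IsBounded C) (ho : o ∈ C) :
    ∃ κ : ℝ, ∀ x ∈ frontier C, ∀ e ∈ Ioo (0 : ℝ) 1,
      hilbertDist C o (x + e • (o - x)) ≤ -(1 / 2) * Real.log e + κ := by
  obtain ⟨r, hr, hball⟩ := Metric.isOpen_iff.1 hopen o ho
  obtain ⟨D, hD, hDC⟩ := hbdd.closure.subset_closedBall_lt 0 o
  set c := 1 + (r / (2 * D))⁻¹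
  refine ⟨1 / 2 * Real.log (2 * c), fun x hx e ⟨he₀, he₁⟩ => ?_⟩
  have hxC : x ∈ closure C := frontier_subset_closure hx
  have hxo : x ≠ o := by rintro rfl; exact (hopen.frontier_eq ▸ hx).2 ho
  have hq : x + e • (o - x) - o = (1 - e) • (x - o) := by module
  have hne : o ≠ x + e • (o - x) := by
    rw [ne_comm, ← sub_ne_zero, hq]
    exact smul_ne_zero (by linarith) (sub_ne_zero.2 hxo)
  -- the chord from `o` through the pushed point meets `ball o r` backwards and reaches
  -- `x + (e / 2) • (o - x)` forwards
  have h₁ : o + (-(r / (2 * D))) • (x + e • (o - x) - o) ∈ C := by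
    apply hball
    have hxD : ‖x - o‖ ≤ D := by simpa [dist_eq_norm] using hDC hxC
    rw [mem_ball, dist_eq_norm, add_sub_cancel_left, hq, smul_smul, norm_smul, Real.norm_eq_abs,
      abs_mul, abs_neg, abs_of_pos (by positivity), abs_of_pos (by linarith)]
    calc r / (2 * D) * (1 - e) * ‖x - o‖ ≤ r / (2 * D) * 1 * D := by gcongr; linarith
      _ < r := by field_simp; linarith
  have h₂ : o + (1 + e / (2 * (1 - e))) • (x + e • (o - x) - o) ∈ C := by
    have : o + (1 + e / (2 * (1 - e))) • (x + e • (o - x) - o) = x + (e / 2) • (o - x) := by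
      rw [hq, smul_smul, show (1 + e / (2 * (1 - e))) * (1 - e) = 1 - e / 2 by
        field_simp; ring]
      module
    rw [this]
    exact hconv.add_smul_sub_mem_of_isOpen hopen hxC ho ⟨by linarith, by linarith⟩
  calc hilbertDist C o (x + e • (o - x))
      ≤ 1 / 2 * Real.log (c * (1 + (e / (2 * (1 - e)))⁻¹)) :=
        hilbertDist_le_half_log hbdd hne (by positivity) (div_pos he₀ (by linarith)) h₁ h₂
    _ ≤ 1 / 2 * Real.log (c * (2 / e)) := by
        gcongr
        rw [inv_div, one_add_div he₀.ne']
        gcongr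
        linarith
    _ = -(1 / 2) * Real.log e + 1 / 2 * Real.log (2 * c) := by
        rw [Real.log_mul (by positivity) (by positivity), Real.log_div two_ne_zero he₀.ne',
          Real.log_mul two_ne_zero (by positivity)]
        ring

theorem exists_mem_segment_of_not_subset_frontier (hconv : Convex ℝ C) (hopen : IsOpen C)
    (hx : x ∈ closure C) (hy : y ∈ closure C) (h : ¬ segment ℝ x y ⊆ frontier C) :
    ∃ w ∈ segment ℝ x y, w ∈ C := by
  obtain ⟨w, hw, hwC⟩ := not_subset.1 h
  refine ⟨w, hw, ?_⟩
  by_contra hw'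
  exact hwC ⟨hconv.closure.segment_subset hx hy hw, by rwa [hopen.interior_eq]⟩

theorem exists_continuousLinearMap_lt_of_mem_segment (hconv : Convex ℝ C) (hopen : IsOpen C)
    (hy : y ∉ C) (hw : w ∈ segment ℝ x y) (hwC : w ∈ C) :
    ∃ u : E →L[ℝ] ℝ, (∀ c ∈ C, u c < u y) ∧ u x < u y := by
  obtain ⟨u, hu⟩ := geometric_hahn_banach_open_point hconv hopen hy
  refine ⟨u, hu, ?_⟩
  obtain ⟨a, b, ha, hb, hab, rfl⟩ := hw
  have := hu _ hwC
  simp only [map_add, map_smul, smul_eq_mul] at this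
  by_contra! h
  have : (a + b) * u y = u y := by rw [hab, one_mul]
  nlinarith [mul_le_mul_of_nonneg_left h ha]

theorem le_one_add_of_apply_lt (u : E →L[ℝ] ℝ) (hxy : u x < u y) {e t : ℝ} (he₀ : 0 ≤ e)
    (he : e ≤ 1 / 2) (ht : u (x + e • (o - x) + t • (y + e • (o - y) - (x + e • (o - x)))) < u y) :
    t ≤ 1 + e * (2 + 2 * |u x - u o| / (u y - u x)) := by
  simp only [map_add, map_sub, map_smul, smul_eq_mul] at ht
  set γ := u y - u x
  set α := u x - u o
  have hγ : 0 < γ := by linarith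
  have hupper : t * ((1 - e) * γ) < γ + e * α := by linarith
  have hbound : γ + e * α ≤ (1 + e * (2 + 2 * |α| / γ)) * ((1 - e) * γ) := by
    have h2e : 0 ≤ 1 - 2 * e := by linarith
    have : (1 + e * (2 + 2 * |α| / γ)) * ((1 - e) * γ) =
        (1 - e) * γ + e * (1 - e) * (2 * γ + 2 * |α|) := by field_simp
    rw [this]
    nlinarith [mul_nonneg (mul_nonneg he₀ h2e) hγ.le,
      mul_nonneg (mul_nonneg he₀ h2e) (abs_nonneg α), mul_nonneg he₀ (sub_nonneg.2 (le_abs_self α))]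
  exact le_of_mul_le_mul_right (hbound.trans' hupper.le) (mul_pos (by linarith) hγ)

theorem exists_chord_mem_Icc_of_mem_segment (hconv : Convex ℝ C) (hopen : IsOpen C) (hx : x ∉ C)
    (hy : y ∉ C) (hw : w ∈ segment ℝ x y) (hwC : w ∈ C) (o : E) :
    ∃ K > 0, ∀ e ∈ Icc (0 : ℝ) (1 / 2), ∀ t : ℝ,
      x + e • (o - x) + t • (y + e • (o - y) - (x + e • (o - x))) ∈ C →
        t ∈ Icc (-(e * K)) (1 + e * K) := by
  obtain ⟨u, hu, hxy⟩ := exists_continuousLinearMap_lt_of_mem_segment hconv hopen hy hw hwC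
  obtain ⟨u', hu', hyx⟩ := exists_continuousLinearMap_lt_of_mem_segment hconv hopen hx
    (segment_symm ℝ x y ▸ hw) hwC
  set K := 2 + 2 * |u x - u o| / (u y - u x)
  set K' := 2 + 2 * |u' y - u' o| / (u' x - u' y)
  have hK : 0 < K := by
    have : 0 < u y - u x := by linarith
    positivity
  refine ⟨max K K', lt_max_of_lt_left hK, fun e ⟨he₀, he⟩ t ht => ⟨?_, ?_⟩⟩
  · -- read from the other end, the chord's lower end becomes an upper end
    have hflip : x + e • (o - x) + t • (y + e • (o - y) - (x + e • (o - x))) =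
        y + e • (o - y) + (1 - t) • (x + e • (o - x) - (y + e • (o - y))) := by module
    have := le_one_add_of_apply_lt u' hyx he₀ he (hflip ▸ hu' _ ht)
    nlinarith [mul_le_mul_of_nonneg_left (le_max_right K K') he₀]
  · have := le_one_add_of_apply_lt u hxy he₀ he (hu _ ht)
    nlinarith [mul_le_mul_of_nonneg_left (le_max_left K K') he₀]

theorem exists_neg_log_sub_le_hilbertDist (hconv : Convex ℝ C) (hopen : IsOpen C) (ho : o ∈ C)
    (hx : x ∈ frontier C) (hy : y ∈ frontier C) (hxy : x ≠ y)
    (hseg : ¬ segment ℝ x y ⊆ frontier C) :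
    ∃ κ : ℝ, ∀ e ∈ Ioc (0 : ℝ) (1 / 2),
      -Real.log e - κ ≤ hilbertDist C (x + e • (o - x)) (y + e • (o - y)) := by
  rw [hopen.frontier_eq] at hx hy
  obtain ⟨w, hw, hwC⟩ := exists_mem_segment_of_not_subset_frontier hconv hopen hx.1 hy.1 hseg
  obtain ⟨K, hK, hchord⟩ := exists_chord_mem_Icc_of_mem_segment hconv hopen hx.2 hy.2 hw hwC o
  refine ⟨Real.log K, fun e ⟨he₀, he⟩ => ?_⟩
  have hne : x + e • (o - x) ≠ y + e • (o - y) := by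
    rw [← sub_ne_zero, show x + e • (o - x) - (y + e • (o - y)) = (1 - e) • (x - y) by module]
    exact smul_ne_zero (by linarith) (sub_ne_zero.2 hxy)
  calc -Real.log e - Real.log K = -Real.log (e * K) := by
        rw [Real.log_mul he₀.ne' hK.ne']; ring
    _ ≤ _ := neg_log_le_hilbertDist hopen
        (hconv.add_smul_sub_mem_of_isOpen hopen hx.1 ho ⟨he₀, by linarith⟩)
        (hconv.add_smul_sub_mem_of_isOpen hopen hy.1 ho ⟨he₀, by linarith⟩) hne
        (by positivity) (hchord e ⟨he₀.le, he⟩)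

end Geometry

theorem eventually_inv_sq_mul_lt_inv_mul {A : ℝ} (hA : 0 < A) (κ κ' B : ℝ) :
    ∀ᶠ e in 𝓝[>] (0 : ℝ), 1 / A ^ 2 * (A * (-(1 / 2) * Real.log e + κ) + B) <
      1 / A * (-Real.log e - κ') - B := by
  filter_upwards [Real.tendsto_log_nhdsGT_zero.eventually_lt_atBot
    (-(2 * κ + 2 * κ' + 2 * B / A + 2 * A * B))] with e he
  have : 1 / A * (-Real.log e - κ') - B - 1 / A ^ 2 * (A * (-(1 / 2) * Real.log e + κ) + B) =
      1 / (2 * A) * (-Real.log e - (2 * κ + 2 * κ' + 2 * B / A + 2 * A * B)) := by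
    field_simp; ring
  have : 0 < 1 / (2 * A) * (-Real.log e - (2 * κ + 2 * κ' + 2 * B / A + 2 * A * B)) :=
    mul_pos (by positivity) (by linarith)
  linarith

section QuasiIsometric

variable {E V : Type*} [NormedAddCommGroup E] [NormedSpace ℝ E] [AddCommGroup V] {C : Set E}
  {o x y : E}

theorem eventually_inv_sq_mul_lt_apply_sub (hconv : Convex ℝ C) (hopen : IsOpen C) (ho : o ∈ C)
    {ν : V → ℝ} {f : E → V} {A B : ℝ} (hA : 0 < A)
    (hqi : ∀ x ∈ C, ∀ y ∈ C, 1 / A * hilbertDist C x y - B ≤ ν (f x - f y))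
    (hx : x ∈ frontier C) (hy : y ∈ frontier C) (hxy : x ≠ y)
    (hseg : ¬ segment ℝ x y ⊆ frontier C) (κ : ℝ) :
    ∀ᶠ e in 𝓝[>] (0 : ℝ), 1 / A ^ 2 * (A * (-(1 / 2) * Real.log e + κ) + B) <
      ν (f (x + e • (o - x)) - f (y + e • (o - y))) := by
  obtain ⟨κ', hκ'⟩ := exists_neg_log_sub_le_hilbertDist hconv hopen ho hx hy hxy hseg
  filter_upwards [Ioc_mem_nhdsGT (by norm_num : (0 : ℝ) < 1 / 2),
    eventually_inv_sq_mul_lt_inv_mul hA κ κ' B] with e he hlt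
  have hmem {z : E} (hz : z ∈ frontier C) : z + e • (o - z) ∈ C :=
    hconv.add_smul_sub_mem_of_isOpen hopen (frontier_subset_closure hz) ho
      ⟨he.1, he.2.trans (by norm_num)⟩
  calc _ < 1 / A * (-Real.log e - κ') - B := hlt
    _ ≤ 1 / A * hilbertDist C (x + e • (o - x)) (y + e • (o - y)) - B := by
        gcongr; exact hκ' e he
    _ ≤ _ := hqi _ (hmem hx) _ (hmem hy)

end QuasiIsometric

/-- If the Hilbert geometry of a bounded open convex set `C ⊆ ℝⁿ` admits a
quasi-isometric embedding into a finite-dimensional normed vector space, then there is an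
integer `N` bounding the cardinality of every subset `X ⊆ ∂C` such that for all distinct
`x, y ∈ X` the segment `[x, y]` is not contained in `∂C`. -/
theorem card_bound_of_quasiIsometricEmbedding {n : ℕ} (C : Set (EuclideanSpace ℝ (Fin n)))
    (hconv : Convex ℝ C) (hopen : IsOpen C) (hbdd : Bornology.IsBounded C)
    (m : ℕ) (ν : (Fin m → ℝ) → ℝ) (hν : IsNormOn (Fin m → ℝ) ν)
    (f : EuclideanSpace ℝ (Fin n) → (Fin m → ℝ)) (A B : ℝ) (hA : 1 ≤ A) (hB : 0 ≤ B)
    (hqi : ∀ x ∈ C, ∀ y ∈ C,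
      (1 / A) * hilbertDist C x y - B ≤ ν (f x - f y) ∧
        ν (f x - f y) ≤ A * hilbertDist C x y + B) :
    ∃ N : ℕ, ∀ X : Set (EuclideanSpace ℝ (Fin n)), X ⊆ frontier C →
      (∀ x ∈ X, ∀ y ∈ X, x ≠ y → ¬ segment ℝ x y ⊆ frontier C) →
      X.Finite ∧ X.ncard ≤ N := by
  rcases C.eq_empty_or_nonempty with rfl | ⟨o, ho⟩
  · exact ⟨0, fun X hX _ => by simp_all [subset_empty_iff]⟩
  have hA₀ : 0 < A := by linarith
  obtain ⟨κ, hκ⟩ := exists_hilbertDist_le_neg_log hconv hopen hbdd ho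
  obtain ⟨N, hN⟩ := hν.exists_encard_le_of_separated (ε := 1 / A ^ 2) (by positivity)
  refine ⟨N, fun X hXC hXseg => encard_le_coe_iff_finite_ncard_le.1 <|
    encard_le_of_forall_finite_subset fun Y hYX hY => ?_⟩
  have hYC {z} (hz : z ∈ Y) : z ∈ frontier C := hXC (hYX hz)
  obtain ⟨e, ⟨he₀, he₁⟩, hlog, hsep⟩ := (Filter.Eventually.and (Ioo_mem_nhdsGT one_pos) <|
    (Real.tendsto_log_nhdsGT_zero.eventually_lt_atBot (2 * κ)).and <|
    (hY.eventually_all).2 fun z hz => (hY.eventually_all).2 fun z' hz' =>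
      eventually_imp_distrib_left.2 fun hzz' =>
        eventually_inv_sq_mul_lt_apply_sub hconv hopen ho hA₀ (fun x hx y hy => (hqi x hx y hy).1)
          (hYC hz) (hYC hz') hzz' (hXseg z (hYX hz) z' (hYX hz') hzz') κ).exists
  refine hN Y (fun z => f (z + e • (o - z))) (f o) _ ?_ (fun z hz => ?_) hsep
  · have : 0 < -(1 / 2) * Real.log e + κ := by linarith
    positivity
  · calc ν (f o - f (z + e • (o - z))) ≤ A * hilbertDist C o (z + e • (o - z)) + B :=
          (hqi o ho _ (hconv.add_smul_sub_mem_of_isOpen hopen (frontier_subset_closure (hYC hz))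
            ho ⟨he₀, he₁.le⟩)).2
      _ ≤ A * (-(1 / 2) * Real.log e + κ) + B := by gcongr; exact hκ z (hYC hz) e ⟨he₀, he₁⟩
end

section
/- Let C ⊂ ℝ^n be a bounded open convex set. Suppose there is an integer N such that every subset X ⊂ ∂C with the property that for all distinct x, y ∈ X the segment [x, y] is not contained in ∂C satisfies Card(X) ≤ N. Then C is the interior of a convex polytope (the convex hull of finitely many points). -/
/-!
Every boundary point of `C` lies in a maximal boundary face: a maximal nonempty convex extreme
subset of `closure C` contained in `∂C` (Zorn). An extreme set through a relative interior point
of a face contains the whole face, so if `x` and `y` are relative interior points of distinct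
maximal faces, `[x, y] ⊄ ∂C`: a maximal face through the midpoint would contain both faces.
Hence there are finitely many maximal faces. Each lies in a supporting hyperplane, and these
hyperplanes cover `∂C`, so `closure C` is the polyhedron they cut out. A polyhedron has finitely
many extreme points, each being determined by its active constraints, and by Krein–Milman the
compact set `closure C` is their convex hull, whose interior is `C`.
-/

open Set Filter Topology

section Intrinsic

variable {E : Type*} [AddCommGroup E] [Module ℝ E]

theorem mem_openSegment_lineMap_of_one_lt (y x : E) {t : ℝ} (ht : 1 < t) :
    x ∈ openSegment ℝ y (AffineMap.lineMap y x t) := by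
  have ht0 : 0 < t := one_pos.trans ht
  rw [openSegment_eq_image_lineMap]
  refine ⟨t⁻¹, ⟨by positivity, inv_lt_one_of_one_lt₀ ht⟩, ?_⟩
  simp only [AffineMap.lineMap_apply_module', add_sub_cancel_right, smul_smul,
    inv_mul_cancel₀ ht0.ne', one_smul, sub_add_cancel]

variable [TopologicalSpace E]

theorem exists_mem_nhds_inter_affineSpan_subset {s : Set E} {x : E}
    (hx : x ∈ intrinsicInterior ℝ s) : ∃ u ∈ 𝓝 x, u ∩ affineSpan ℝ s ⊆ s := by
  obtain ⟨x', hx', rfl⟩ := mem_intrinsicInterior.1 hx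
  obtain ⟨u, hu, hus⟩ := (mem_nhds_subtype _ _ _).1 (mem_interior_iff_mem_nhds.1 hx')
  exact ⟨u, hu, fun _ ⟨hyu, hyA⟩ =>
    hus (show (⟨_, hyA⟩ : affineSpan ℝ s).1 ∈ u from hyu)⟩

variable [IsTopologicalAddGroup E] [ContinuousSMul ℝ E]

theorem exists_mem_openSegment_of_mem_intrinsicInterior {s : Set E} {x y : E}
    (hx : x ∈ intrinsicInterior ℝ s) (hy : y ∈ s) :
    ∃ z ∈ s, x ∈ openSegment ℝ y z := by
  obtain ⟨u, hu, hus⟩ := exists_mem_nhds_inter_affineSpan_subset hx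
  have hlim : Tendsto (AffineMap.lineMap y x : ℝ → E) (𝓝[>] 1) (𝓝 x) := by
    simpa using (AffineMap.lineMap_continuous (p := y) (q := x)).tendsto' 1 x (by simp)
      |>.mono_left nhdsWithin_le_nhds
  obtain ⟨t, htu, ht⟩ := ((hlim.eventually_mem hu).and self_mem_nhdsWithin).exists
  have hxA : x ∈ affineSpan ℝ s := subset_affineSpan ℝ s (intrinsicInterior_subset hx)
  exact ⟨_, hus ⟨htu, AffineMap.lineMap_mem t (subset_affineSpan ℝ s hy) hxA⟩,
    mem_openSegment_lineMap_of_one_lt y x ht⟩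

theorem IsExtreme.subset_of_mem_intrinsicInterior {A B s : Set E} {x : E}
    (hAB : IsExtreme ℝ A B) (hsA : s ⊆ A) (hx : x ∈ intrinsicInterior ℝ s) (hxB : x ∈ B) :
    s ⊆ B := fun _ hy =>
  let ⟨_, hz, hxyz⟩ := exists_mem_openSegment_of_mem_intrinsicInterior hx hy
  hAB.left_mem_of_mem_openSegment (hsA hy) (hsA hz) hxB hxyz

end Intrinsic

section Polyhedron

variable {E : Type*} [AddCommGroup E] [Module ℝ E]

theorem LinearMap.eq_right_of_mem_segment (f : E →ₗ[ℝ] ℝ) {x z w : E} {c : ℝ}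
    (hx : f x < c) (hz : f z ≤ c) (hw : w ∈ segment ℝ x z) (hwc : f w = c) : w = z := by
  obtain ⟨a, b, ha, hb, hab, rfl⟩ := hw
  obtain rfl | ha := ha.eq_or_lt
  · obtain rfl : b = 1 := by linarith
    simp
  · rw [map_add, map_smul, map_smul, smul_eq_mul, smul_eq_mul] at hwc
    have hax := mul_lt_mul_of_pos_left hx ha
    have hbz := mul_le_mul_of_nonneg_left hz hb
    have hc : a * c + b * c = c := by rw [← add_mul, hab, one_mul]
    linarith

variable [TopologicalSpace E]

theorem eq_of_mem_extremePoints_setOf_forall_le {S : Set (StrongDual ℝ E × ℝ)} (hS : S.Finite)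
    {x y : E} (hx : x ∈ {z | ∀ p ∈ S, p.1 z ≤ p.2}.extremePoints ℝ)
    (hy : ∀ p ∈ S, p.1 y ≤ p.2) (hxy : ∀ p ∈ S, p.1 x = p.2 → p.1 y = p.2) : y = x := by
  have hval : ∀ (p : StrongDual ℝ E × ℝ) (t : ℝ),
      p.1 (AffineMap.lineMap y x t) = t * (p.1 x - p.1 y) + p.1 y := fun p t => by
    simp [AffineMap.lineMap_apply_module']
  -- Going from `y` through `x` slightly beyond `x` violates no constraint.
  have hev : ∀ᶠ t in 𝓝 (1 : ℝ), ∀ p ∈ S, p.1 (AffineMap.lineMap y x t) ≤ p.2 := by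
    refine hS.eventually_all.2 fun p hp => ?_
    simp only [hval]
    rcases (hx.1 p hp).eq_or_lt with hact | hinact
    · exact Eventually.of_forall fun t => by rw [hact, hxy p hp hact]; simp
    · have hlim : Tendsto (fun t : ℝ => t * (p.1 x - p.1 y) + p.1 y) (𝓝 1) (𝓝 (p.1 x)) :=
        ((continuous_id.mul continuous_const).add continuous_const).tendsto' 1 _ (by simp)
      exact hlim.eventually (eventually_le_nhds hinact)
  obtain ⟨t, htS, ht⟩ := ((hev.filter_mono nhdsWithin_le_nhds).and
    (self_mem_nhdsWithin (s := Ioi (1 : ℝ)))).exists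
  exact hx.2 hy htS (mem_openSegment_lineMap_of_one_lt y x ht)

theorem finite_extremePoints_setOf_forall_le {S : Set (StrongDual ℝ E × ℝ)} (hS : S.Finite) :
    ({z | ∀ p ∈ S, p.1 z ≤ p.2}.extremePoints ℝ).Finite := by
  let active : E → Set (StrongDual ℝ E × ℝ) := fun x => {p ∈ S | p.1 x = p.2}
  refine Finite.of_finite_image (f := active) (hS.finite_subsets.subset ?_) fun x hx y hy hxy => ?_
  · rintro _ ⟨x, -, rfl⟩
    exact fun p hp => hp.1
  · exact eq_of_mem_extremePoints_setOf_forall_le hS hy hx.1 fun p hp hpy =>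
      (hxy ▸ (show p ∈ active y from ⟨hp, hpy⟩)).2

theorem IsCompact.convexHull_extremePoints_of_finite [T2Space E] [IsTopologicalAddGroup E]
    [ContinuousSMul ℝ E] [LocallyConvexSpace ℝ E] {s : Set E} (hs : IsCompact s)
    (hconv : Convex ℝ s) (hfin : (s.extremePoints ℝ).Finite) :
    convexHull ℝ (s.extremePoints ℝ) = s := by
  rw [← (hfin.isCompact_convexHull ℝ).isClosed.closure_eq,
    closure_convexHull_extremePoints hs hconv]

end Polyhedron

theorem IsPreconnected.inter_frontier_nonempty_of_isOpen {α : Type*} [TopologicalSpace α]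
    {s u : Set α} (hs : IsPreconnected s) (hu : IsOpen u) (hsu : (s ∩ u).Nonempty)
    (hsu' : ¬s ⊆ u) : (s ∩ frontier u).Nonempty := by
  by_contra h
  refine hsu' (hs.subset_of_closure_inter_subset hu hsu fun w ⟨hwc, hws⟩ => ?_)
  by_contra hwu
  exact h ⟨w, hws, hwc, by rwa [hu.interior_eq]⟩

theorem isExtreme_sUnion {𝕜 E : Type*} [Semiring 𝕜] [PartialOrder 𝕜] [AddCommMonoid E]
    [Module 𝕜 E] {A : Set E} {S : Set (Set E)} (hS : ∀ B ∈ S, IsExtreme 𝕜 A B) :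
    IsExtreme 𝕜 A (⋃₀ S) := by
  refine ⟨sUnion_subset fun B hB => (hS B hB).subset, fun x hx y hy z hz hzxy => ?_⟩
  obtain ⟨B, hB, hzB⟩ := hz
  exact ⟨B, hB, (hS B hB).left_mem_of_mem_openSegment hx hy hzB hzxy⟩

section BoundaryFace

variable {E : Type*} [NormedAddCommGroup E] [NormedSpace ℝ E] {C F G : Set E}

theorem IsOpen.closure_eq_setOf_forall_le (hCo : IsOpen C) (hne : C.Nonempty)
    {S : Set (StrongDual ℝ E × ℝ)} (hlt : ∀ p ∈ S, ∀ a ∈ C, p.1 a < p.2)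
    (hcov : frontier C ⊆ ⋃ p ∈ S, {w | p.1 w = p.2}) :
    closure C = {z | ∀ p ∈ S, p.1 z ≤ p.2} := by
  have hclosed : IsClosed {z : E | ∀ p ∈ S, p.1 z ≤ p.2} := by
    simp only [ofPred_forall]
    exact isClosed_iInter fun p => isClosed_iInter fun _ =>
      isClosed_le p.1.continuous continuous_const
  refine (closure_minimal (fun a ha p hp => (hlt p hp a ha).le) hclosed).antisymm fun z hz => ?_
  by_contra hzC
  obtain ⟨x, hx⟩ := hne
  obtain ⟨w, hwxz, hwC⟩ := (convex_segment x z).isPreconnected.inter_frontier_nonempty_of_isOpen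
    hCo ⟨x, left_mem_segment ℝ x z, hx⟩
    fun h => hzC (subset_closure (h (right_mem_segment ℝ x z)))
  obtain ⟨p, hp, hpw⟩ := mem_iUnion₂.1 (hcov hwC)
  have hwz : w = z :=
    (p.1 : E →ₗ[ℝ] ℝ).eq_right_of_mem_segment (hlt p hp x hx) (hz p hp) hwxz hpw
  exact hzC (hwz ▸ hwC.1)

def IsBoundaryFace (C F : Set E) : Prop :=
  F.Nonempty ∧ Convex ℝ F ∧ IsExtreme ℝ (closure C) F ∧ F ⊆ frontier C

theorem IsBoundaryFace.exists_maximal (hF : IsBoundaryFace C F) :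
    ∃ G, F ⊆ G ∧ Maximal (IsBoundaryFace C) G := by
  refine zorn_subset_nonempty {G | IsBoundaryFace C G} (fun S hS hchain ⟨G, hG⟩ => ?_) F hF
  exact ⟨⋃₀ S, ⟨(hS hG).1.mono (subset_sUnion_of_mem hG),
    hchain.directedOn.convex_sUnion fun B hB => (hS hB).2.1,
    isExtreme_sUnion fun B hB => (hS hB).2.2.1, sUnion_subset fun B hB => (hS hB).2.2.2⟩,
    fun _ => subset_sUnion_of_mem⟩

theorem IsBoundaryFace.eq_of_maximal_of_mem_intrinsicInterior (hG : IsBoundaryFace C G)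
    (hF : Maximal (IsBoundaryFace C) F) {x : E} (hx : x ∈ intrinsicInterior ℝ F)
    (hxG : x ∈ G) : F = G :=
  hF.eq_of_subset hG (hG.2.2.1.subset_of_mem_intrinsicInterior hF.prop.2.2.1.subset hx hxG)

theorem Convex.exists_isBoundaryFace_toExposed (hC : Convex ℝ C) (hCo : IsOpen C) {w : E}
    (hw : w ∈ frontier C) : ∃ l : StrongDual ℝ E, (∀ a ∈ C, l a < l w) ∧
      IsBoundaryFace C (l.toExposed (closure C)) ∧ w ∈ l.toExposed (closure C) := by
  rw [frontier, hCo.interior_eq] at hw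
  obtain ⟨l, hl⟩ := geometric_hahn_banach_open_point hC hCo hw.2
  have hwl : w ∈ l.toExposed (closure C) :=
    ⟨hw.1, fun a ha => closure_minimal (fun b hb => (hl b hb).le)
      (isClosed_le l.continuous continuous_const) ha⟩
  refine ⟨l, hl, ⟨⟨w, hwl⟩, ContinuousLinearMap.toExposed.isExposed.convex hC.closure,
    ContinuousLinearMap.toExposed.isExposed.isExtreme, fun y hy => ⟨hy.1, ?_⟩⟩, hwl⟩
  rw [hCo.interior_eq]
  exact fun hyC => (hl y hyC).not_ge (hy.2 w hw.1)

theorem Convex.exists_maximal_isBoundaryFace_mem (hC : Convex ℝ C) (hCo : IsOpen C) {w : E}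
    (hw : w ∈ frontier C) : ∃ F, Maximal (IsBoundaryFace C) F ∧ w ∈ F := by
  obtain ⟨l, -, hface, hwl⟩ := hC.exists_isBoundaryFace_toExposed hCo hw
  obtain ⟨F, hsub, hF⟩ := hface.exists_maximal
  exact ⟨F, hF, hsub hwl⟩

theorem Convex.eq_of_segment_subset_frontier (hC : Convex ℝ C) (hCo : IsOpen C)
    (hF : Maximal (IsBoundaryFace C) F) (hG : Maximal (IsBoundaryFace C) G) {x y : E}
    (hx : x ∈ intrinsicInterior ℝ F) (hy : y ∈ intrinsicInterior ℝ G)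
    (hxy : segment ℝ x y ⊆ frontier C) : F = G := by
  have hm := lineMap_mem_openSegment ℝ x y (t := 1 / 2) ⟨by norm_num, by norm_num⟩
  set m := AffineMap.lineMap x y (1 / 2 : ℝ)
  obtain ⟨H, hH, hmH⟩ :=
    hC.exists_maximal_isBoundaryFace_mem hCo (hxy (openSegment_subset_segment ℝ x y hm))
  have hxC : x ∈ closure C := hF.prop.2.2.1.subset (intrinsicInterior_subset hx)
  have hyC : y ∈ closure C := hG.prop.2.2.1.subset (intrinsicInterior_subset hy)
  have hxH := hH.prop.2.2.1.left_mem_of_mem_openSegment hxC hyC hmH hm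
  have hyH := hH.prop.2.2.1.right_mem_of_mem_openSegment hxC hyC hmH hm
  exact (hH.prop.eq_of_maximal_of_mem_intrinsicInterior hF hx hxH).trans
    (hH.prop.eq_of_maximal_of_mem_intrinsicInterior hG hy hyH).symm

variable [FiniteDimensional ℝ E]

theorem Convex.finite_setOf_maximal_isBoundaryFace (hC : Convex ℝ C) (hCo : IsOpen C)
    (hN : ∀ X ⊆ frontier C, X.Pairwise (fun x y => ¬segment ℝ x y ⊆ frontier C) →
      X.Finite) :
    {F | Maximal (IsBoundaryFace C) F}.Finite := by
  choose! p hp using fun F (hF : Maximal (IsBoundaryFace C) F) =>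
    hF.prop.1.intrinsicInterior hF.prop.2.1
  have hpC : ∀ F, Maximal (IsBoundaryFace C) F → p F ∈ frontier C := fun F hF =>
    hF.prop.2.2.2 (intrinsicInterior_subset (hp F hF))
  have hinj : ∀ F, Maximal (IsBoundaryFace C) F → ∀ G, Maximal (IsBoundaryFace C) G →
      segment ℝ (p F) (p G) ⊆ frontier C → F = G := fun F hF G hG =>
    hC.eq_of_segment_subset_frontier hCo hF hG (hp F hF) (hp G hG)
  refine Finite.of_finite_image (hN _ (image_subset_iff.2 hpC) ?_) fun F hF G hG hpFG => ?_
  · rintro _ ⟨F, hF, rfl⟩ _ ⟨G, hG, rfl⟩ hne hseg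
    exact hne (congrArg p (hinj F hF G hG hseg))
  · refine hinj F hF G hG ?_
    rw [← hpFG, segment_same]
    exact singleton_subset_iff.2 (hpC F hF)

theorem Maximal.exists_supporting_hyperplane (hC : Convex ℝ C) (hCo : IsOpen C)
    (hF : Maximal (IsBoundaryFace C) F) :
    ∃ l : StrongDual ℝ E, ∃ c, (∀ a ∈ C, l a < c) ∧ ∀ y ∈ F, l y = c := by
  obtain ⟨x, hx⟩ := hF.prop.1.intrinsicInterior hF.prop.2.1
  obtain ⟨l, hl, hface, hxl⟩ :=
    hC.exists_isBoundaryFace_toExposed hCo (hF.prop.2.2.2 (intrinsicInterior_subset hx))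
  have hFl := hface.eq_of_maximal_of_mem_intrinsicInterior hF hx hxl
  refine ⟨l, l x, hl, fun y hy => ?_⟩
  rw [hFl] at hy
  exact (hxl.2 y hy.1).antisymm (hy.2 x hxl.1)

theorem Convex.exists_finite_supporting_hyperplanes (hC : Convex ℝ C) (hCo : IsOpen C)
    (hN : ∀ X ⊆ frontier C, X.Pairwise (fun x y => ¬segment ℝ x y ⊆ frontier C) →
      X.Finite) :
    ∃ S : Set (StrongDual ℝ E × ℝ), S.Finite ∧ (∀ p ∈ S, ∀ a ∈ C, p.1 a < p.2) ∧
      frontier C ⊆ ⋃ p ∈ S, {w | p.1 w = p.2} := by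
  choose! l c hl using fun F (hF : Maximal (IsBoundaryFace C) F) =>
    hF.exists_supporting_hyperplane hC hCo
  refine ⟨(fun F => (l F, c F)) '' {F | Maximal (IsBoundaryFace C) F},
    (hC.finite_setOf_maximal_isBoundaryFace hCo hN).image _, ?_, fun w hw => ?_⟩
  · rintro _ ⟨F, hF, rfl⟩
    exact (hl F hF).1
  · obtain ⟨F, hF, hwF⟩ := hC.exists_maximal_isBoundaryFace_mem hCo hw
    exact mem_iUnion₂.2 ⟨_, mem_image_of_mem _ hF, (hl F hF).2 w hwF⟩

end BoundaryFace

/-- Let `C ⊆ ℝⁿ` be a bounded open convex set. If there is an integer `N`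
bounding the cardinality of every subset `X ⊆ ∂C` such that for all distinct `x, y ∈ X` the
segment `[x, y]` is not contained in `∂C`, then `C` is the interior of a convex polytope
(the convex hull of finitely many points). -/
theorem polytope_of_card_bound {n : ℕ} (C : Set (EuclideanSpace ℝ (Fin n)))
    (hconv : Convex ℝ C) (hopen : IsOpen C) (hbdd : Bornology.IsBounded C)
    (N : ℕ)
    (hN : ∀ X : Set (EuclideanSpace ℝ (Fin n)), X ⊆ frontier C →
      (∀ x ∈ X, ∀ y ∈ X, x ≠ y → ¬ segment ℝ x y ⊆ frontier C) →
      X.Finite ∧ X.ncard ≤ N) :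
    ∃ V : Finset (EuclideanSpace ℝ (Fin n)),
      C = interior (convexHull ℝ (V : Set (EuclideanSpace ℝ (Fin n)))) := by
  rcases C.eq_empty_or_nonempty with rfl | hne
  · exact ⟨∅, by simp⟩
  obtain ⟨S, hSfin, hlt, hcov⟩ :=
    hconv.exists_finite_supporting_hyperplanes hopen fun X hX hind => (hN X hX hind).1
  have hext : ((closure C).extremePoints ℝ).Finite := by
    rw [hopen.closure_eq_setOf_forall_le hne hlt hcov]
    exact finite_extremePoints_setOf_forall_le hSfin
  refine ⟨hext.toFinset, ?_⟩
  rw [hext.coe_toFinset,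
    hbdd.isCompact_closure.convexHull_extremePoints_of_finite hconv.closure hext,
    hconv.interior_closure_eq_interior_of_nonempty_interior (hopen.interior_eq.symm ▸ hne),
    hopen.interior_eq]
end

section
/- Let H_n ⊂ ℝ^{n+1} be the standard n-simplex and let W_n = {x ∈ ℝ^{n+1} : x_1 + ⋯ + x_{n+1} = 0}. Define Φ_n on the relative interior of H_n by Φ_n(x_1,…,x_{n+1}) = (ln(x_1/g), …, ln(x_{n+1}/g)) where g = (x_1⋯x_{n+1})^{1/(n+1)} is the geometric mean of the coordinates. Then Φ_n is a bijection from the relative interior of H_n onto W_n, and there exists a norm ‖·‖ on the n-dimensional vector space W_n, whose unit ball is a centrally symmetric convex polytope, such that for all x, y in the relative interior of H_n, d_{H_n}(x, y) = ‖Φ_n(x) − Φ_n(y)‖. -/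
open Classical

/-- `ν` is a norm on the set `W` (a linear subspace) of the real vector space `E`. -/
def IsNormOnSet {E : Type*} [AddCommGroup E] [Module ℝ E] (W : Set E) (ν : E → ℝ) : Prop :=
  (∀ x ∈ W, 0 ≤ ν x) ∧ (∀ x ∈ W, ν x = 0 → x = 0) ∧
    (∀ (c : ℝ), ∀ x ∈ W, ν (c • x) = |c| * ν x) ∧
    ∀ x ∈ W, ∀ y ∈ W, ν (x + y) ≤ ν x + ν y

/-!
On the open simplex the chord through `p ≠ q` is `{t | p + t • (q - p) > 0}`; writing
`sᵢ = qᵢ / pᵢ`, it is the interval `(-1 / (max s - 1), 1 / (1 - min s))`, and its cross-ratio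
is `max s / min s`. Hence `2 d(p, q) = maxᵢⱼ ((log p - log q)ᵢ - (log p - log q)ⱼ)`, which only
sees `log p - log q` modulo constants, i.e. `Φ p - Φ q`. The norm is half the spread
`max - min` of the coordinates; its unit ball in `W` is the projection of the cube `[0, 2]ⁿ⁺¹`
along `(1, …, 1)`, a centrally symmetric polytope.
-/

open Finset Real

lemma exists_lt_of_sum_eq_of_ne {ι : Type*} [Fintype ι] {p q : ι → ℝ}
    (h : ∑ i, p i = ∑ i, q i) (hne : p ≠ q) : ∃ i, p i < q i := by
  by_contra! hle
  exact hne (funext fun i => ((sum_eq_sum_iff_of_le fun i _ => hle i).1 h.symm i (mem_univ i)).symm)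

lemma setOf_forall_one_add_mul_sub_one_pos {ι : Type*} {s : ι → ℝ} {i₀ j₀ : ι}
    (hmin : ∀ k, s i₀ ≤ s k) (hmax : ∀ k, s k ≤ s j₀) (h₀ : s i₀ < 1) (h₁ : 1 < s j₀) :
    {t : ℝ | ∀ k, 0 < 1 + t * (s k - 1)} = Set.Ioo (-(s j₀ - 1)⁻¹) (1 - s i₀)⁻¹ := by
  have hM : 0 < s j₀ - 1 := by linarith
  have hm : 0 < 1 - s i₀ := by linarith
  ext t
  rw [Set.mem_ofPred_eq, Set.mem_Ioo, neg_lt, inv_eq_one_div, inv_eq_one_div, lt_div_iff₀ hM,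
    lt_div_iff₀ hm]
  constructor
  · intro h
    constructor <;> nlinarith [h i₀, h j₀]
  · rintro ⟨h₁, h₂⟩ k
    rcases le_total 0 t with ht | ht
    · nlinarith [hmin k]
    · nlinarith [hmax k]

lemma crossRatio_Ioo {m M : ℝ} (hm₀ : 0 < m) (hm : m < 1) (hM : 1 < M) :
    (1 - sInf (Set.Ioo (-(M - 1)⁻¹) (1 - m)⁻¹)) / -sInf (Set.Ioo (-(M - 1)⁻¹) (1 - m)⁻¹) *
      (sSup (Set.Ioo (-(M - 1)⁻¹) (1 - m)⁻¹) / (sSup (Set.Ioo (-(M - 1)⁻¹) (1 - m)⁻¹) - 1)) =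
      M / m := by
  have hM₁ : 0 < M - 1 := by linarith
  have hm₁ : 0 < 1 - m := by linarith
  have hlt : -(M - 1)⁻¹ < (1 - m)⁻¹ := by linarith [inv_pos.2 hM₁, inv_pos.2 hm₁]
  rw [csInf_Ioo hlt, csSup_Ioo hlt]
  field_simp
  rw [sub_sub_cancel]
  field_simp
  ring

section IntrinsicInterior

open Filter Topology

variable {E : Type*} [NormedAddCommGroup E] [NormedSpace ℝ E] {s : Set E}

lemma inter_affineSpan_subset_intrinsicInterior {U : Set E} (hU : IsOpen U)
    (hUs : U ∩ affineSpan ℝ s ⊆ s) : U ∩ affineSpan ℝ s ⊆ intrinsicInterior ℝ s := by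
  rintro x ⟨hxU, hxs⟩
  exact ⟨⟨x, hxs⟩, interior_maximal (t := Subtype.val ⁻¹' U) (fun y hy => hUs ⟨hy, y.2⟩)
    (hU.preimage continuous_subtype_val) hxU, rfl⟩

lemma eventually_add_smul_mem_of_mem_intrinsicInterior {x v : E}
    (hx : x ∈ intrinsicInterior ℝ s) (hv : v ∈ (affineSpan ℝ s).direction) :
    ∀ᶠ t : ℝ in 𝓝 0, x + t • v ∈ s := by
  obtain ⟨y, hy, rfl⟩ := hx
  let γ : ℝ → affineSpan ℝ s := fun t =>
    ⟨t • v +ᵥ (y : E), AffineSubspace.vadd_mem_of_mem_direction (Submodule.smul_mem _ t hv) y.2⟩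
  have hγ : Continuous γ := by fun_prop
  have hγ0 : γ 0 = y := by ext; simp [γ]
  filter_upwards [hγ.continuousAt.preimage_mem_nhds (hγ0 ▸ isOpen_interior.mem_nhds hy)] with t ht
  simpa [γ, add_comm] using interior_subset ht

end IntrinsicInterior

variable {ι : Type*} [Fintype ι]

section Spread

variable [Nonempty ι]

noncomputable def spread (v : ι → ℝ) : ℝ :=
  univ.sup' univ_nonempty fun ij : ι × ι => v ij.1 - v ij.2

lemma sub_le_spread (v : ι → ℝ) (i j : ι) : v i - v j ≤ spread v :=
  le_sup' (fun ij : ι × ι => v ij.1 - v ij.2) (mem_univ (i, j))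

lemma spread_le_iff {v : ι → ℝ} {c : ℝ} : spread v ≤ c ↔ ∀ i j, v i - v j ≤ c := by
  simp [spread, sup'_le_iff]

lemma spread_eq_sub {v : ι → ℝ} {i j : ι} (hi : ∀ k, v i ≤ v k) (hj : ∀ k, v k ≤ v j) :
    spread v = v j - v i :=
  le_antisymm (spread_le_iff.2 fun k l => by linarith [hj k, hi l]) (sub_le_spread v j i)

lemma spread_nonneg (v : ι → ℝ) : 0 ≤ spread v := by
  obtain ⟨i⟩ := ‹Nonempty ι›
  simpa using sub_le_spread v i i

lemma eq_of_spread_eq_zero {v : ι → ℝ} (h : spread v = 0) (i j : ι) : v i = v j :=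
  le_antisymm (by linarith [sub_le_spread v i j]) (by linarith [sub_le_spread v j i])

@[simp]
lemma spread_add_const (v : ι → ℝ) (c : ℝ) : spread (fun i => v i + c) = spread v := by
  simp [spread]

@[simp]
lemma spread_neg (v : ι → ℝ) : spread (-v) = spread v := by
  refine le_antisymm (spread_le_iff.2 fun i j => ?_) (spread_le_iff.2 fun i j => ?_)
  · simpa only [Pi.neg_apply, neg_sub_neg] using sub_le_spread v j i
  · simpa only [Pi.neg_apply, neg_sub_neg, neg_neg] using sub_le_spread (-v) j i

lemma spread_smul_of_nonneg {c : ℝ} (hc : 0 ≤ c) (v : ι → ℝ) :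
    spread (c • v) = c * spread v := by
  simp only [spread, Pi.smul_apply, smul_eq_mul, ← mul_sub, mul₀_sup' hc]

lemma spread_smul (c : ℝ) (v : ι → ℝ) : spread (c • v) = |c| * spread v := by
  rcases le_total 0 c with hc | hc
  · rw [spread_smul_of_nonneg hc, abs_of_nonneg hc]
  · rw [← neg_neg c, neg_smul, spread_neg, spread_smul_of_nonneg (neg_nonneg.2 hc), abs_neg,
      abs_of_nonneg (neg_nonneg.2 hc)]

lemma spread_add_le (u v : ι → ℝ) : spread (u + v) ≤ spread u + spread v :=
  spread_le_iff.2 fun i j => by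
    simp only [Pi.add_apply]
    linarith [sub_le_spread u i j, sub_le_spread v i j]

end Spread

noncomputable def centering : (ι → ℝ) →ₗ[ℝ] EuclideanSpace ℝ ι where
  toFun f := WithLp.toLp 2 fun i => f i - (∑ j, f j) / Fintype.card ι
  map_add' f g := by ext i; simp [sum_add_distrib]; ring
  map_smul' c f := by ext i; simp [← mul_sum]; ring

lemma centering_apply (f : ι → ℝ) (i : ι) :
    centering f i = f i - (∑ j, f j) / Fintype.card ι := rfl

lemma centering_ofLp {w : EuclideanSpace ℝ ι} (hw : ∑ i, w i = 0) : centering w.ofLp = w := by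
  ext i
  simp [centering_apply, hw]

lemma exists_add_const_of_centering_eq {f g : ι → ℝ} (h : centering f = centering g) :
    ∃ c, ∀ i, f i = g i + c :=
  ⟨(∑ j, f j) / Fintype.card ι - (∑ j, g j) / Fintype.card ι, fun i => by
    have := congrArg (· i) h
    simp only [centering_apply] at this
    linarith⟩

def openSimplex (ι : Type*) [Fintype ι] : Set (EuclideanSpace ℝ ι) :=
  {x | (∀ i, 0 < x i) ∧ ∑ i, x i = 1}

lemma log_div_geomMean {x : EuclideanSpace ℝ ι} (hx : ∀ i, 0 < x i) (i : ι) :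
    log (x i / (∏ j, x j) ^ (Fintype.card ι : ℝ)⁻¹) = centering (fun j => log (x j)) i := by
  have hprod : 0 < ∏ j, x j := prod_pos fun j _ => hx j
  rw [log_div (hx i).ne' (rpow_pos_of_pos hprod _).ne', log_rpow hprod,
    log_prod fun j _ => (hx j).ne', centering_apply]
  ring

lemma convexHull_range_single [DecidableEq ι] :
    convexHull ℝ (Set.range fun i => EuclideanSpace.single i (1 : ℝ)) =
      WithLp.ofLp ⁻¹' stdSimplex ℝ ι := by
  have := (WithLp.linearEquiv 2 ℝ (ι → ℝ)).symm.toLinearMap.image_convexHull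
    (Set.range fun i => Pi.single i 1)
  rw [convexHull_rangle_single_eq_stdSimplex, ← Set.range_comp, LinearEquiv.coe_toLinearMap,
    LinearEquiv.image_symm_eq_preimage] at this
  exact this.symm

lemma affineSpan_stdSimplex_subset :
    (affineSpan ℝ (WithLp.ofLp ⁻¹' stdSimplex ℝ ι : Set (EuclideanSpace ℝ ι)) :
      Set (EuclideanSpace ℝ ι)) ⊆ {x | ∑ i, x i = 1} := by
  let f : EuclideanSpace ℝ ι →ᵃ[ℝ] ℝ :=
    ((∑ i, EuclideanSpace.proj i : EuclideanSpace ℝ ι →L[ℝ] ℝ) :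
      EuclideanSpace ℝ ι →ₗ[ℝ] ℝ).toAffineMap
  have hf : ∀ x, f x = ∑ i, x i := fun x => by simp [f]
  intro x hx
  have := AffineMap.eqOn_affineSpan (f := f) (g := AffineMap.const ℝ _ (1 : ℝ))
    (fun y hy => by simpa [hf] using hy.2) hx
  simpa [hf] using this

lemma intrinsicInterior_stdSimplex :
    intrinsicInterior ℝ (WithLp.ofLp ⁻¹' stdSimplex ℝ ι : Set (EuclideanSpace ℝ ι)) =
      openSimplex ι := by
  set S : Set (EuclideanSpace ℝ ι) := WithLp.ofLp ⁻¹' stdSimplex ℝ ι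
  apply subset_antisymm
  · intro x hx
    have hxS : x ∈ S := intrinsicInterior_subset hx
    refine ⟨fun i => (hxS.1 i).lt_of_ne' fun hi => ?_, hxS.2⟩
    obtain ⟨j, -, hj⟩ : ∃ j ∈ univ, (0 : ℝ) < x j :=
      exists_lt_of_sum_lt (by simpa using hxS.2.symm ▸ zero_lt_one)
    have hji : j ≠ i := by rintro rfl; linarith
    have hv : EuclideanSpace.single j 1 - EuclideanSpace.single i 1 ∈
        (affineSpan ℝ S).direction := by
      rw [direction_affineSpan]
      exact vsub_mem_vectorSpan ℝ (by simp [S, single_mem_stdSimplex])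
        (by simp [S, single_mem_stdSimplex])
    obtain ⟨t, ht, htpos⟩ := (((eventually_add_smul_mem_of_mem_intrinsicInterior hx hv).filter_mono
        nhdsWithin_le_nhds).and (self_mem_nhdsWithin (s := Set.Ioi 0))).exists
    have := ht.1 i
    simp [hi, hji] at this
    linarith [htpos]
  · have hU : IsOpen {y : EuclideanSpace ℝ ι | ∀ i, 0 < y i} := by
      simp only [Set.ofPred_forall]
      exact isOpen_iInter_of_finite fun i => isOpen_lt continuous_const (by fun_prop)
    intro x hx
    refine inter_affineSpan_subset_intrinsicInterior hU ?_
      ⟨hx.1, subset_affineSpan ℝ S ⟨fun i => (hx.1 i).le, hx.2⟩⟩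
    rintro y ⟨hy, hyA⟩
    exact ⟨fun i => (hy i).le, affineSpan_stdSimplex_subset hyA⟩

lemma add_smul_sub_mem_openSimplex_iff {p q : EuclideanSpace ℝ ι} (hp : p ∈ openSimplex ι)
    (hq : q ∈ openSimplex ι) (t : ℝ) :
    p + t • (q - p) ∈ openSimplex ι ↔ ∀ i, 0 < 1 + t * (q i / p i - 1) := by
  have hcoord : ∀ i, (p + t • (q - p)) i = p i * (1 + t * (q i / p i - 1)) := fun i => by
    have := (hp.1 i).ne'
    simp only [PiLp.add_apply, PiLp.smul_apply, PiLp.sub_apply, smul_eq_mul]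
    field_simp
  have hsum : ∑ i, (p + t • (q - p)) i = 1 := by
    simp [sum_add_distrib, ← mul_sum, hp.2, hq.2]
  rw [openSimplex, Set.mem_ofPred_eq, hsum]
  simp only [hcoord, mul_pos_iff_of_pos_left (hp.1 _), and_true]

variable [Nonempty ι]

lemma sum_centering (f : ι → ℝ) : ∑ i, centering f i = 0 := by
  simp only [centering_apply, sum_sub_distrib, sum_const, card_univ, nsmul_eq_mul]
  field_simp
  ring

lemma centering_add_const (f : ι → ℝ) (c : ℝ) : centering (fun i => f i + c) = centering f := by
  ext i
  simp only [centering_apply, sum_add_distrib, sum_const, card_univ, nsmul_eq_mul]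
  field_simp
  ring

lemma spread_centering (f : ι → ℝ) : spread (centering f).ofLp = spread f := by
  simp only [centering, LinearMap.coe_mk, AddHom.coe_mk, sub_eq_add_neg, spread_add_const]

lemma bijOn_centering_log :
    Set.BijOn (fun x : EuclideanSpace ℝ ι => centering fun i => log (x i)) (openSimplex ι)
      {w | ∑ i, w i = 0} := by
  refine ⟨fun x _ => sum_centering _, fun x hx y hy hxy => ?_, fun w hw => ?_⟩
  · obtain ⟨c, hc⟩ := exists_add_const_of_centering_eq hxy
    have hxy : ∀ i, x i = exp c * y i := fun i => by
      rw [← exp_log (hx.1 i), ← exp_log (hy.1 i), hc, exp_add, mul_comm]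
    have hsum := congrArg (fun f : ι → ℝ => ∑ i, f i) (funext hxy)
    simp only [← mul_sum, hx.2, hy.2, mul_one] at hsum
    ext i
    rw [hxy, ← hsum, one_mul]
  · set Z := ∑ j, exp (w j)
    have hZ : 0 < Z := sum_pos (fun j _ => exp_pos _) univ_nonempty
    refine ⟨WithLp.toLp 2 fun i => exp (w i) / Z,
      ⟨fun i => div_pos (exp_pos _) hZ, by rw [← sum_div, div_self hZ.ne']⟩, ?_⟩
    have hlog : (fun i => log (exp (w i) / Z)) = fun i => w i + -log Z := by
      ext i
      rw [log_div (exp_ne_zero _) hZ.ne', log_exp, sub_eq_add_neg]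
    simp only [hlog, centering_add_const, centering_ofLp hw]

lemma hilbertDist_openSimplex {p q : EuclideanSpace ℝ ι} (hp : p ∈ openSimplex ι)
    (hq : q ∈ openSimplex ι) :
    hilbertDist (openSimplex ι) p q = spread (fun i => log (p i) - log (q i)) / 2 := by
  rw [hilbertDist]
  split_ifs with hpq
  · simp [hpq, spread]
  set s : ι → ℝ := fun i => q i / p i
  have hs : ∀ i, 0 < s i := fun i => div_pos (hq.1 i) (hp.1 i)
  obtain ⟨i₀, hi₀⟩ := Finite.exists_min s
  obtain ⟨j₀, hj₀⟩ := Finite.exists_max s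
  have hne : p.ofLp ≠ q.ofLp := fun h => hpq (WithLp.ofLp_injective 2 h)
  have h₀ : s i₀ < 1 := by
    obtain ⟨k, hk⟩ := exists_lt_of_sum_eq_of_ne (hq.2.trans hp.2.symm) hne.symm
    exact (hi₀ k).trans_lt ((div_lt_one (hp.1 k)).2 hk)
  have h₁ : 1 < s j₀ := by
    obtain ⟨k, hk⟩ := exists_lt_of_sum_eq_of_ne (hp.2.trans hq.2.symm) hne
    exact ((one_lt_div (hp.1 k)).2 hk).trans_le (hj₀ k)
  have hchord :
      {t : ℝ | p + t • (q - p) ∈ openSimplex ι} = Set.Ioo (-(s j₀ - 1)⁻¹) (1 - s i₀)⁻¹ :=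
    (Set.ext fun t => add_smul_sub_mem_openSimplex_iff hp hq t).trans
      (setOf_forall_one_add_mul_sub_one_pos hi₀ hj₀ h₀ h₁)
  have hspread : spread (fun i => log (p i) - log (q i)) = log (s j₀) - log (s i₀) := by
    have hlog : (fun i => log (p i) - log (q i)) = -fun i => log (s i) := funext fun i => by
      simp only [s, Pi.neg_apply, log_div (hq.1 i).ne' (hp.1 i).ne', neg_sub]
    rw [hlog, spread_neg]
    exact spread_eq_sub (fun k => log_le_log (hs i₀) (hi₀ k)) (fun k => log_le_log (hs k) (hj₀ k))
  rw [hchord, crossRatio_Ioo (hs i₀) h₀ h₁, log_div (hs j₀).ne' (hs i₀).ne', hspread]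
  ring

lemma isNormOnSet_spread :
    IsNormOnSet {w : EuclideanSpace ℝ ι | ∑ i, w i = 0} fun x => spread x.ofLp / 2 := by
  refine ⟨fun x _ => by linarith [spread_nonneg x.ofLp], fun x hx h => ?_,
    fun c x _ => ?_, fun x _ y _ => ?_⟩
  · have hconst : ∀ i j, x i = x j := eq_of_spread_eq_zero (by linarith)
    obtain ⟨j⟩ := ‹Nonempty ι›
    have hj : Fintype.card ι * x j = 0 := by
      simpa [sum_congr rfl fun i _ => hconst i j] using hx
    ext i
    rw [hconst i j]
    simpa using hj
  · simp only [WithLp.ofLp_smul, spread_smul]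
    ring
  · simp only [WithLp.ofLp_add]
    linarith [spread_add_le x.ofLp y.ofLp]

lemma image_centering_pi_Icc :
    centering '' Set.univ.pi (fun _ : ι => Set.Icc (0 : ℝ) 2) =
      {x ∈ {w : EuclideanSpace ℝ ι | ∑ i, w i = 0} | spread x.ofLp / 2 ≤ 1} := by
  ext x
  constructor
  · rintro ⟨f, hf, rfl⟩
    refine ⟨sum_centering f, ?_⟩
    rw [spread_centering, div_le_one two_pos, spread_le_iff]
    intro i j
    linarith [(hf i trivial).2, (hf j trivial).1]
  · rintro ⟨hx, hspread⟩
    obtain ⟨j, hj⟩ := Finite.exists_min fun i => x i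
    refine ⟨fun i => x i + -x j, fun i _ => ⟨by linarith [hj i], ?_⟩, ?_⟩
    · linarith [sub_le_spread x.ofLp i j]
    · rw [centering_add_const, centering_ofLp hx]

lemma exists_finset_convexHull_eq_unitBall :
    ∃ V : Finset (EuclideanSpace ℝ ι), (V : Set (EuclideanSpace ℝ ι)) ⊆ {w | ∑ i, w i = 0} ∧
      {x ∈ {w : EuclideanSpace ℝ ι | ∑ i, w i = 0} | spread x.ofLp / 2 ≤ 1} = convexHull ℝ V := by
  refine ⟨(Fintype.piFinset fun _ => {0, 2}).image centering, ?_, ?_⟩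
  · simp only [coe_image]
    rintro _ ⟨f, -, rfl⟩
    exact sum_centering f
  · rw [coe_image, Fintype.coe_piFinset, ← centering.image_convexHull, convexHull_pi]
    simp only [coe_insert, coe_singleton, convexHull_pair, segment_eq_Icc zero_le_two,
      image_centering_pi_Icc]

/-- The map `Φₙ(x) = (log(x₁/g), …, log(x_{n+1}/g))`, `g` the geometric mean
of the coordinates, is a bijection from the relative interior of the standard `n`-simplex
`Hₙ ⊆ ℝ^{n+1}` onto the hyperplane `Wₙ = {∑ xᵢ = 0}`, and there is a norm on `Wₙ`, whose unit
ball is a centrally symmetric convex polytope, turning `Φₙ` into an isometry from the Hilbert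
geometry of `Hₙ` onto `(Wₙ, ‖·‖)`. -/
theorem simplex_hilbertGeometry_isometric_normedSpace {n : ℕ}
    (Hn W : Set (EuclideanSpace ℝ (Fin (n + 1))))
    (hHn : Hn = convexHull ℝ
      (Set.range fun i : Fin (n + 1) => EuclideanSpace.single i (1 : ℝ)))
    (hW : W = {x : EuclideanSpace ℝ (Fin (n + 1)) | ∑ i, x i = 0})
    (Φ : EuclideanSpace ℝ (Fin (n + 1)) → EuclideanSpace ℝ (Fin (n + 1)))
    (hΦ : ∀ (x : EuclideanSpace ℝ (Fin (n + 1))) (i : Fin (n + 1)),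
      Φ x i = Real.log (x i / (∏ j, x j) ^ (((n : ℝ) + 1)⁻¹))) :
    Set.BijOn Φ (intrinsicInterior ℝ Hn) W ∧
      ∃ ν : EuclideanSpace ℝ (Fin (n + 1)) → ℝ, IsNormOnSet W ν ∧
        (∃ V : Finset (EuclideanSpace ℝ (Fin (n + 1))),
          (V : Set (EuclideanSpace ℝ (Fin (n + 1)))) ⊆ W ∧
            {x ∈ W | ν x ≤ 1} = convexHull ℝ (V : Set (EuclideanSpace ℝ (Fin (n + 1))))) ∧
        (∀ x ∈ W, ν (-x) = ν x) ∧
        ∀ x ∈ intrinsicInterior ℝ Hn, ∀ y ∈ intrinsicInterior ℝ Hn,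
          hilbertDist (intrinsicInterior ℝ Hn) x y = ν (Φ x - Φ y) := by
  have hrel : intrinsicInterior ℝ Hn = openSimplex (Fin (n + 1)) := by
    rw [hHn, convexHull_range_single, intrinsicInterior_stdSimplex]
  have hΦ' : Set.EqOn (fun x => centering fun i => log (x i)) Φ (openSimplex (Fin (n + 1))) :=
    fun x hx => by
      ext i
      have := log_div_geomMean hx.1 i
      rw [Fintype.card_fin, Nat.cast_add_one] at this
      rw [hΦ, this]
  subst hW
  rw [hrel]
  refine ⟨bijOn_centering_log.congr hΦ', fun x => spread x.ofLp / 2, isNormOnSet_spread,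
    exists_finset_convexHull_eq_unitBall, fun x _ => by simp, fun x hx y hy => ?_⟩
  rw [hilbertDist_openSimplex hx hy, ← hΦ' hx, ← hΦ' hy, ← map_sub]
  exact congrArg (· / 2) (spread_centering _).symm
end

section
/- Let H_n ⊂ ℝ^{n+1} be the standard n-simplex, S_n the standard n-cell-simplex, and Φ_n the map defined on the relative interior of H_n by Φ_n(x_1,…,x_{n+1}) = (ln(x_1/g), …, ln(x_{n+1}/g)) with g = (x_1⋯x_{n+1})^{1/(n+1)}. Then the image under Φ_n of the intersection of S_n with the relative interior of H_n is exactly the closed positive cone with vertex at the origin spanned by the vectors ṽ_k = (n−k, …, n−k, −(k+1), …, −(k+1)) (with k+1 coordinates equal to n−k and n−k coordinates equal to −(k+1)), for k = 0, …, n−1; that is, Φ_n(S_n ∩ relint H_n) = { Σ_{k=0}^{n−1} a_k ṽ_k : a_k ≥ 0 for all k } ⊂ W_n. -/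
/-!
`Φₙ` is the centred log-ratio transform `x ↦ log x - mean (log x)`; on the open simplex it is a
bijection onto `Wₙ` whose inverse is the softmax map, and since `log` and `exp` are increasing,
both preserve the order of the coordinates. The cell simplex `Sₙ` is the set of points of `Hₙ`
with non-increasing coordinates, so `Φₙ(Sₙ ∩ relint Hₙ)` is the set of `y ∈ Wₙ` with
`y₀ ≥ ⋯ ≥ yₙ`. This is the cone of the `ṽₖ`, because `ṽₖ` lies in `Wₙ` and its consecutive
differences `ṽₖ(i) - ṽₖ(i+1)` vanish except for `i = k`, where the difference is `n + 1`.
-/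

open Finset Filter Topology Real

section IntrinsicInterior

variable {𝕜 V : Type*} [NormedField 𝕜] [NormedAddCommGroup V] [NormedSpace 𝕜 V]

theorem eventually_lineMap_mem_of_mem_intrinsicInterior {s : Set V} {x y : V}
    (hx : x ∈ intrinsicInterior 𝕜 s) (hy : y ∈ affineSpan 𝕜 s) :
    ∀ᶠ t in 𝓝 (0 : 𝕜), AffineMap.lineMap x y t ∈ s := by
  obtain ⟨z, hz, rfl⟩ := mem_intrinsicInterior.1 hx
  let f : 𝕜 → affineSpan 𝕜 s := fun t =>
    ⟨AffineMap.lineMap (z : V) y t, AffineMap.lineMap_mem t z.2 hy⟩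
  have hf : Continuous f := AffineMap.lineMap_continuous.subtype_mk _
  have hf0 : f 0 = z := Subtype.ext (AffineMap.lineMap_apply_zero _ _)
  have := hf.continuousAt.preimage_mem_nhds (hf0 ▸ isOpen_interior.mem_nhds hz)
  exact mem_of_superset this fun t ht =>
    interior_subset (s := ((↑) : affineSpan 𝕜 s → V) ⁻¹' s) ht

end IntrinsicInterior

section StdSimplex

variable {ι : Type*} [Fintype ι]

theorem sum_eq_one_of_mem_affineSpan_stdSimplex {x : ι → ℝ}
    (hx : x ∈ affineSpan ℝ (stdSimplex ℝ ι)) : ∑ i, x i = 1 := by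
  have : affineSpan ℝ (stdSimplex ℝ ι) ≤ fintypeAffineCoords ι ℝ :=
    affineSpan_le.2 fun f hf => mem_fintypeAffineCoords_iff_sum.2 hf.2
  exact mem_fintypeAffineCoords_iff_sum.1 (this hx)

theorem intrinsicInterior_stdSimplex_s13 :
    intrinsicInterior ℝ (stdSimplex ℝ ι) = {x | (∀ i, 0 < x i) ∧ ∑ i, x i = 1} := by
  classical
  ext x
  constructor
  · intro hx
    obtain ⟨hx0, hx1⟩ := intrinsicInterior_subset hx
    refine ⟨fun i => (hx0 i).lt_of_ne' fun hxi => ?_, hx1⟩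
    -- moving from `x` away from the vertex `eᵢ` makes the vanishing coordinate `xᵢ` negative
    have hline := eventually_lineMap_mem_of_mem_intrinsicInterior hx
      (subset_affineSpan ℝ _ (single_mem_stdSimplex ℝ i))
    obtain ⟨t, ht, htneg⟩ := ((hline.filter_mono nhdsWithin_le_nhds).and
      self_mem_nhdsWithin : ∀ᶠ t in 𝓝[<] (0 : ℝ), _ ∧ t < 0).exists
    have := ht.1 i
    simp only [AffineMap.lineMap_apply, vsub_eq_sub, vadd_eq_add, Pi.add_apply, Pi.smul_apply,
      Pi.sub_apply, Pi.single_eq_same, hxi, sub_zero, smul_eq_mul, mul_one, add_zero] at this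
    linarith
  · rintro ⟨hx0, hx1⟩
    have hxS : x ∈ stdSimplex ℝ ι := ⟨fun i => (hx0 i).le, hx1⟩
    refine mem_intrinsicInterior.2 ⟨⟨x, subset_affineSpan ℝ _ hxS⟩, ?_, rfl⟩
    let U : Set (affineSpan ℝ (stdSimplex ℝ ι)) := ⋂ i, {w | 0 < (w : ι → ℝ) i}
    have hU : IsOpen U := isOpen_iInter_of_finite fun i =>
      isOpen_lt continuous_const ((continuous_apply i).comp continuous_subtype_val)
    refine mem_interior.2 ⟨U, fun w hw => ?_, hU, Set.mem_iInter.2 hx0⟩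
    exact ⟨fun i => (Set.mem_iInter.1 hw i).le, sum_eq_one_of_mem_affineSpan_stdSimplex w.2⟩

end StdSimplex

namespace EuclideanSpace

variable {ι : Type*}

theorem convexHull_range_single_one [Fintype ι] [DecidableEq ι] :
    convexHull ℝ (Set.range fun i : ι => EuclideanSpace.single i (1 : ℝ)) =
      WithLp.toLp 2 '' stdSimplex ℝ ι := by
  rw [← convexHull_rangle_single_eq_stdSimplex]
  have := (PiLp.continuousLinearEquiv 2 ℝ (fun _ : ι => ℝ)).symm.toLinearMap.image_convexHull
    (Set.range fun i : ι => Pi.single i (1 : ℝ))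
  rw [← Set.range_comp] at this
  exact this.symm

theorem intrinsicInterior_convexHull_range_single_one [Fintype ι] [DecidableEq ι] :
    intrinsicInterior ℝ (convexHull ℝ (Set.range fun i : ι => EuclideanSpace.single i (1 : ℝ))) =
      {x | (∀ i, 0 < x i) ∧ ∑ i, x i = 1} := by
  rw [convexHull_range_single_one]
  let e := (PiLp.continuousLinearEquiv 2 ℝ (fun _ : ι => ℝ)).symm.toContinuousAffineEquiv
  change intrinsicInterior ℝ (e '' _) = _
  rw [e.intrinsicInterior_image, intrinsicInterior_stdSimplex_s13]
  ext x
  exact ⟨by rintro ⟨y, hy, rfl⟩; exact hy, fun hx => ⟨x.ofLp, hx, rfl⟩⟩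

theorem sum_smul_apply_sub_apply {κ : Type*} [Fintype κ] (c : κ → ℝ)
    (v : κ → EuclideanSpace ℝ ι) (i j : ι) :
    (∑ k, c k • v k) i - (∑ k, c k • v k) j = ∑ k, c k * (v k i - v k j) := by
  simp [mul_sub]

end EuclideanSpace

theorem eq_of_forall_eq_add_of_sum_eq {ι : Type*} [Fintype ι] [Nonempty ι] {f g : ι → ℝ}
    {c : ℝ} (h : ∀ i, f i = g i + c) (hsum : ∑ i, f i = ∑ i, g i) : f = g := by
  have hc : c = 0 := by
    simp only [h, sum_add_distrib, sum_const, card_univ, nsmul_eq_mul] at hsum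
    simpa [Fintype.card_ne_zero] using hsum
  funext i
  rw [h, hc, add_zero]

namespace Fin

theorem sum_ite_val_le {m k : ℕ} (hk : k < m) (a b : ℝ) :
    ∑ i : Fin m, (if (i : ℕ) ≤ k then a else b) = (k + 1) * a + (m - (k + 1)) * b := by
  have hcard : #{i : Fin m | (i : ℕ) ≤ k} = k + 1 := by
    rw [← Fin.card_Iic ⟨k, hk⟩]
    congr 1
    ext i
    simp [Fin.le_def]
  rw [Finset.sum_ite, Finset.sum_const, Finset.sum_const, Finset.filter_not,
    card_sdiff_of_subset (filter_subset _ _), hcard]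
  simp [Nat.cast_sub (show k + 1 ≤ m by omega)]

theorem sub_eq_sub_last_of_castSucc_sub_succ_eq {α : Type*} [AddCommGroup α] {n : ℕ}
    {f g : Fin (n + 1) → α}
    (h : ∀ i : Fin n, f i.castSucc - f i.succ = g i.castSucc - g i.succ) (i : Fin (n + 1)) :
    f i - g i = f (last n) - g (last n) := by
  induction i using Fin.reverseInduction with
  | last => rfl
  | cast i ih => rw [← ih]; exact sub_eq_sub_iff_sub_eq_sub.1 (h i)

theorem eq_of_castSucc_sub_succ_eq_of_last_eq {α : Type*} [AddCommGroup α] {n : ℕ}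
    {f g : Fin (n + 1) → α}
    (h : ∀ i : Fin n, f i.castSucc - f i.succ = g i.castSucc - g i.succ)
    (hlast : f (last n) = g (last n)) : f = g := by
  funext i
  rw [← sub_eq_zero, sub_eq_sub_last_of_castSucc_sub_succ_eq h i, hlast, sub_self]

theorem eq_of_castSucc_sub_succ_eq_of_sum_eq {n : ℕ} {f g : Fin (n + 1) → ℝ}
    (h : ∀ i : Fin n, f i.castSucc - f i.succ = g i.castSucc - g i.succ)
    (hsum : ∑ i, f i = ∑ i, g i) : f = g :=
  eq_of_forall_eq_add_of_sum_eq
    (fun i => eq_add_of_sub_eq' (sub_eq_sub_last_of_castSucc_sub_succ_eq h i)) hsum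

end Fin

section CellSimplex

variable {n : ℕ}

noncomputable def cellSimplexVertex (n : ℕ) (k : Fin (n + 1)) : EuclideanSpace ℝ (Fin (n + 1)) :=
  WithLp.toLp 2 fun i => if (i : ℕ) ≤ k then ((k : ℝ) + 1)⁻¹ else 0

theorem cellSimplexVertex_apply (k i : Fin (n + 1)) :
    cellSimplexVertex n k i = if (i : ℕ) ≤ k then ((k : ℝ) + 1)⁻¹ else 0 := rfl

theorem sum_cellSimplexVertex (k : Fin (n + 1)) : ∑ i, cellSimplexVertex n k i = 1 := by
  simp only [cellSimplexVertex_apply, Fin.sum_ite_val_le k.isLt]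
  field_simp
  ring

theorem antitone_cellSimplexVertex (k : Fin (n + 1)) : Antitone (cellSimplexVertex n k) := by
  intro i j hij
  simp only [cellSimplexVertex_apply]
  split_ifs <;> first | rfl | positivity | omega

theorem cellSimplexVertex_castSucc_sub_succ (k : Fin (n + 1)) (i : Fin n) :
    cellSimplexVertex n k i.castSucc - cellSimplexVertex n k i.succ =
      if k = i.castSucc then ((k : ℝ) + 1)⁻¹ else 0 := by
  simp only [cellSimplexVertex_apply, Fin.val_castSucc, Fin.val_succ, Fin.ext_iff]
  split_ifs <;> first | omega | ring

theorem cellSimplexVertex_last (k : Fin (n + 1)) :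
    cellSimplexVertex n k (Fin.last n) = if k = Fin.last n then ((n : ℝ) + 1)⁻¹ else 0 := by
  simp only [cellSimplexVertex_apply, Fin.val_last, Fin.ext_iff]
  split_ifs <;> first | omega | simp_all

theorem sum_smul_cellSimplexVertex_castSucc_sub_succ (c : Fin (n + 1) → ℝ) (i : Fin n) :
    (∑ k, c k • cellSimplexVertex n k) i.castSucc - (∑ k, c k • cellSimplexVertex n k) i.succ =
      c i.castSucc / ((i : ℝ) + 1) := by
  rw [EuclideanSpace.sum_smul_apply_sub_apply]
  simp [cellSimplexVertex_castSucc_sub_succ, div_eq_mul_inv]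

theorem sum_smul_cellSimplexVertex_last (c : Fin (n + 1) → ℝ) :
    (∑ k, c k • cellSimplexVertex n k) (Fin.last n) = c (Fin.last n) / ((n : ℝ) + 1) := by
  simp [cellSimplexVertex_last, div_eq_mul_inv]

theorem sum_sum_smul_cellSimplexVertex (c : Fin (n + 1) → ℝ) :
    ∑ i, (∑ k, c k • cellSimplexVertex n k) i = ∑ k, c k := by
  simp [Finset.sum_comm (γ := Fin (n + 1)), ← mul_sum, sum_cellSimplexVertex]

theorem convexHull_range_cellSimplexVertex :
    convexHull ℝ (Set.range (cellSimplexVertex n)) =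
      {x : EuclideanSpace ℝ (Fin (n + 1)) | (∀ i, 0 ≤ x i) ∧ ∑ i, x i = 1 ∧ Antitone x} := by
  refine Set.Subset.antisymm (convexHull_min ?_ ?_) ?_
  · rintro _ ⟨k, rfl⟩
    refine ⟨fun i => ?_, sum_cellSimplexVertex k, antitone_cellSimplexVertex k⟩
    simp only [cellSimplexVertex_apply]
    split_ifs <;> positivity
  · rintro x ⟨hx0, hx1, hxa⟩ y ⟨hy0, hy1, hya⟩ a b ha hb hab
    simp only [Set.mem_ofPred_eq, PiLp.add_apply, PiLp.smul_apply, smul_eq_mul, sum_add_distrib,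
      ← mul_sum, hx1, hy1, mul_one, hab]
    exact ⟨fun i => by have := hx0 i; have := hy0 i; positivity, trivial,
      fun i j hij => add_le_add (mul_le_mul_of_nonneg_left (hxa hij) ha)
        (mul_le_mul_of_nonneg_left (hya hij) hb)⟩
  · rintro x ⟨hx0, hx1, hxa⟩
    -- the barycentric coordinates of `x` with respect to the vertices `v̂ₖ`
    let c : Fin (n + 1) → ℝ := Fin.lastCases (((n : ℝ) + 1) * x (Fin.last n))
      fun j => ((j : ℝ) + 1) * (x j.castSucc - x j.succ)
    have hc0 : ∀ k, 0 ≤ c k := by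
      intro k
      induction k using Fin.lastCases with
      | last => simp only [c, Fin.lastCases_last]; have := hx0 (Fin.last n); positivity
      | cast j =>
        simp only [c, Fin.lastCases_castSucc]
        have := sub_nonneg.2 (hxa (Fin.castSucc_le_succ j))
        positivity
    have hx : ∑ k, c k • cellSimplexVertex n k = x := by
      refine PiLp.ext (congrFun (Fin.eq_of_castSucc_sub_succ_eq_of_last_eq (fun i => ?_) ?_))
      · rw [sum_smul_cellSimplexVertex_castSucc_sub_succ]
        simp only [c, Fin.lastCases_castSucc]
        field_simp
      · rw [sum_smul_cellSimplexVertex_last]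
        simp only [c, Fin.lastCases_last]
        field_simp
    rw [← hx]
    refine (convex_convexHull ℝ _).sum_mem (fun k _ => hc0 k) ?_
      (fun k _ => subset_convexHull ℝ _ ⟨k, rfl⟩)
    rw [← sum_sum_smul_cellSimplexVertex, hx, hx1]

noncomputable def cellConeGenerator (n : ℕ) (k : Fin n) : EuclideanSpace ℝ (Fin (n + 1)) :=
  WithLp.toLp 2 fun i => if (i : ℕ) ≤ k then (n : ℝ) - k else -((k : ℝ) + 1)

theorem cellConeGenerator_apply (k : Fin n) (i : Fin (n + 1)) :
    cellConeGenerator n k i = if (i : ℕ) ≤ k then (n : ℝ) - k else -((k : ℝ) + 1) := rfl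

theorem sum_cellConeGenerator (k : Fin n) : ∑ i, cellConeGenerator n k i = 0 := by
  simp only [cellConeGenerator_apply, Fin.sum_ite_val_le (k.isLt.trans n.lt_succ_self)]
  push_cast
  ring

theorem cellConeGenerator_castSucc_sub_succ (k i : Fin n) :
    cellConeGenerator n k i.castSucc - cellConeGenerator n k i.succ =
      if k = i then (n : ℝ) + 1 else 0 := by
  simp only [cellConeGenerator_apply, Fin.val_castSucc, Fin.val_succ, Fin.ext_iff]
  split_ifs <;> first | omega | ring

theorem sum_smul_cellConeGenerator_castSucc_sub_succ (a : Fin n → ℝ) (i : Fin n) :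
    (∑ k, a k • cellConeGenerator n k) i.castSucc - (∑ k, a k • cellConeGenerator n k) i.succ =
      ((n : ℝ) + 1) * a i := by
  rw [EuclideanSpace.sum_smul_apply_sub_apply]
  simp [cellConeGenerator_castSucc_sub_succ, mul_comm]

theorem sum_sum_smul_cellConeGenerator (a : Fin n → ℝ) :
    ∑ i, (∑ k, a k • cellConeGenerator n k) i = 0 := by
  simp [Finset.sum_comm (γ := Fin (n + 1)), ← mul_sum, sum_cellConeGenerator]

theorem exists_nonneg_sum_smul_cellConeGenerator_iff (y : EuclideanSpace ℝ (Fin (n + 1))) :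
    (∃ a : Fin n → ℝ, (∀ k, 0 ≤ a k) ∧ y = ∑ k, a k • cellConeGenerator n k) ↔
      ∑ i, y i = 0 ∧ Antitone y := by
  constructor
  · rintro ⟨a, ha, rfl⟩
    refine ⟨sum_sum_smul_cellConeGenerator a, Fin.antitone_iff_succ_le.2 fun i => ?_⟩
    rw [← sub_nonneg, sum_smul_cellConeGenerator_castSucc_sub_succ]
    exact mul_nonneg (by positivity) (ha i)
  · rintro ⟨hy0, hya⟩
    refine ⟨fun k => (y k.castSucc - y k.succ) / ((n : ℝ) + 1), fun k => ?_, ?_⟩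
    · have := sub_nonneg.2 (hya (Fin.castSucc_le_succ k))
      positivity
    · refine PiLp.ext (congrFun (Fin.eq_of_castSucc_sub_succ_eq_of_sum_eq (fun i => ?_) ?_))
      · rw [sum_smul_cellConeGenerator_castSucc_sub_succ]
        field_simp
      · rw [sum_sum_smul_cellConeGenerator, hy0]

end CellSimplex

section Softmax

variable {ι : Type*} [Fintype ι]

noncomputable def softmax (y : EuclideanSpace ℝ ι) : EuclideanSpace ℝ ι :=
  WithLp.toLp 2 fun i => exp (y i) / ∑ j, exp (y j)

theorem softmax_apply (y : EuclideanSpace ℝ ι) (i : ι) :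
    softmax y i = exp (y i) / ∑ j, exp (y j) := rfl

theorem softmax_pos (y : EuclideanSpace ℝ ι) (i : ι) : 0 < softmax y i :=
  div_pos (exp_pos _) (sum_pos (fun _ _ => exp_pos _) ⟨i, mem_univ i⟩)

theorem sum_softmax [Nonempty ι] (y : EuclideanSpace ℝ ι) : ∑ i, softmax y i = 1 := by
  simp only [softmax_apply, ← sum_div]
  exact div_self (sum_pos (fun _ _ => exp_pos _) univ_nonempty).ne'

theorem softmax_le_softmax_iff {y : EuclideanSpace ℝ ι} {i j : ι} :
    softmax y i ≤ softmax y j ↔ y i ≤ y j := by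
  rw [softmax_apply, softmax_apply, div_le_div_iff_of_pos_right
    (sum_pos (fun _ _ => exp_pos _) ⟨i, mem_univ i⟩), exp_le_exp]

theorem log_softmax (y : EuclideanSpace ℝ ι) (i : ι) :
    log (softmax y i) = y i - log (∑ j, exp (y j)) := by
  rw [softmax_apply, log_div (exp_pos _).ne'
    (sum_pos (fun _ _ => exp_pos _) ⟨i, mem_univ i⟩).ne', log_exp]

end Softmax

section CenteredLogRatio

variable {n : ℕ}

noncomputable def centeredLogRatio (x : EuclideanSpace ℝ (Fin (n + 1))) :
    EuclideanSpace ℝ (Fin (n + 1)) :=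
  WithLp.toLp 2 fun i => log (x i / (∏ j, x j) ^ (((n : ℝ) + 1)⁻¹))

variable {x : EuclideanSpace ℝ (Fin (n + 1))}

theorem centeredLogRatio_apply_of_pos (hx : ∀ i, 0 < x i) (i : Fin (n + 1)) :
    centeredLogRatio x i = log (x i) - log ((∏ j, x j) ^ (((n : ℝ) + 1)⁻¹)) :=
  log_div (hx i).ne' (rpow_pos_of_pos (prod_pos fun j _ => hx j) _).ne'

theorem sum_centeredLogRatio (hx : ∀ i, 0 < x i) : ∑ i, centeredLogRatio x i = 0 := by
  have hprod : 0 < ∏ j, x j := prod_pos fun j _ => hx j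
  simp only [centeredLogRatio_apply_of_pos hx, sum_sub_distrib, sum_const, card_univ,
    Fintype.card_fin, nsmul_eq_mul, log_rpow hprod, ← log_prod fun j _ => (hx j).ne']
  push_cast
  field_simp
  ring

theorem centeredLogRatio_le_centeredLogRatio_iff (hx : ∀ i, 0 < x i) {i j : Fin (n + 1)} :
    centeredLogRatio x i ≤ centeredLogRatio x j ↔ x i ≤ x j := by
  rw [centeredLogRatio_apply_of_pos hx, centeredLogRatio_apply_of_pos hx, sub_le_sub_iff_right,
    log_le_log_iff (hx i) (hx j)]

theorem centeredLogRatio_softmax {y : EuclideanSpace ℝ (Fin (n + 1))} (hy : ∑ i, y i = 0) :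
    centeredLogRatio (softmax y) = y := by
  have hshift : ∀ i, centeredLogRatio (softmax y) i = y i +
      -(log (∑ j, exp (y j)) + log ((∏ j, softmax y j) ^ (((n : ℝ) + 1)⁻¹))) := fun i => by
    rw [centeredLogRatio_apply_of_pos (softmax_pos y), log_softmax]
    ring
  exact PiLp.ext (congrFun (eq_of_forall_eq_add_of_sum_eq hshift
    ((sum_centeredLogRatio (softmax_pos y)).trans hy.symm)))

theorem image_centeredLogRatio :
    centeredLogRatio '' {x : EuclideanSpace ℝ (Fin (n + 1)) |
        (∀ i, 0 < x i) ∧ ∑ i, x i = 1 ∧ Antitone x} =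
      {y : EuclideanSpace ℝ (Fin (n + 1)) | ∑ i, y i = 0 ∧ Antitone y} := by
  ext y
  constructor
  · rintro ⟨x, ⟨hx0, -, hxa⟩, rfl⟩
    exact ⟨sum_centeredLogRatio hx0,
      fun i j hij => (centeredLogRatio_le_centeredLogRatio_iff hx0).2 (hxa hij)⟩
  · rintro ⟨hy0, hya⟩
    exact ⟨softmax y, ⟨softmax_pos y, sum_softmax y,
      fun i j hij => softmax_le_softmax_iff.2 (hya hij)⟩, centeredLogRatio_softmax hy0⟩

end CenteredLogRatio

theorem convexHull_cellSimplexVertex_inter_intrinsicInterior {n : ℕ} :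
    convexHull ℝ (Set.range (cellSimplexVertex n)) ∩ intrinsicInterior ℝ
        (convexHull ℝ (Set.range fun i : Fin (n + 1) => EuclideanSpace.single i (1 : ℝ))) =
      {x : EuclideanSpace ℝ (Fin (n + 1)) | (∀ i, 0 < x i) ∧ ∑ i, x i = 1 ∧ Antitone x} := by
  rw [convexHull_range_cellSimplexVertex,
    EuclideanSpace.intrinsicInterior_convexHull_range_single_one]
  ext x
  exact ⟨fun ⟨⟨_, _, ha⟩, hp, hs⟩ => ⟨hp, hs, ha⟩,
    fun ⟨hp, hs, ha⟩ => ⟨⟨fun i => (hp i).le, hs, ha⟩, hp, hs⟩⟩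

/-- The image under `Φₙ` of (the intersection with the relative interior of
the standard simplex `Hₙ` of) the standard `n`-cell-simplex `Sₙ` is the closed positive cone
spanned by the vectors `ṽₖ = (n-k, …, n-k, -(k+1), …, -(k+1))`, `k = 0, …, n-1`. -/
theorem image_standardCellSimplex_eq_cone {n : ℕ}
    (Hn Sn : Set (EuclideanSpace ℝ (Fin (n + 1))))
    (hHn : Hn = convexHull ℝ
      (Set.range fun i : Fin (n + 1) => EuclideanSpace.single i (1 : ℝ)))
    (vhat : Fin (n + 1) → EuclideanSpace ℝ (Fin (n + 1)))
    (hvhat : ∀ (k : Fin (n + 1)) (i : Fin (n + 1)),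
      vhat k i = if (i : ℕ) ≤ (k : ℕ) then (((k : ℕ) : ℝ) + 1)⁻¹ else 0)
    (hSn : Sn = convexHull ℝ (Set.range vhat))
    (vtilde : Fin n → EuclideanSpace ℝ (Fin (n + 1)))
    (hvtilde : ∀ (k : Fin n) (i : Fin (n + 1)),
      vtilde k i = if (i : ℕ) ≤ (k : ℕ) then (n : ℝ) - ((k : ℕ) : ℝ)
        else -(((k : ℕ) : ℝ) + 1))
    (Φ : EuclideanSpace ℝ (Fin (n + 1)) → EuclideanSpace ℝ (Fin (n + 1)))
    (hΦ : ∀ (x : EuclideanSpace ℝ (Fin (n + 1))) (i : Fin (n + 1)),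
      Φ x i = Real.log (x i / (∏ j, x j) ^ (((n : ℝ) + 1)⁻¹))) :
    Φ '' (Sn ∩ intrinsicInterior ℝ Hn) =
      {y : EuclideanSpace ℝ (Fin (n + 1)) |
        ∃ a : Fin n → ℝ, (∀ k, 0 ≤ a k) ∧ y = ∑ k, a k • vtilde k} := by
  obtain rfl : Φ = centeredLogRatio := funext fun x => PiLp.ext (hΦ x)
  obtain rfl : vhat = cellSimplexVertex n := funext fun k => PiLp.ext (hvhat k)
  obtain rfl : vtilde = cellConeGenerator n := funext fun k => PiLp.ext (hvtilde k)
  subst hHn hSn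
  rw [convexHull_cellSimplexVertex_inter_intrinsicInterior, image_centeredLogRatio]
  ext y
  exact (exists_nonneg_sum_smul_cellConeGenerator_iff y).symm
end

section
/- Let C ⊂ ℝ^n be a bounded open convex set. The Hilbert distance d_C is the length distance associated to the Finsler metric F_C: for all p, q ∈ C, d_C(p, q) equals the infimum, over all piecewise C^1 paths σ : [0,1] → C with σ(0) = p and σ(1) = q, of the length ∫_0^1 F_C(σ(t), σ'(t)) dt. -/
open Classical

/-- The Finsler norm of a convex domain `C`: for `v ≠ 0`, the line `t ↦ p + t • v` meets `∂C`
at the parameters `t⁻ = sInf` and `t⁺ = sSup` of the chord parameter set, with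
`‖p - p⁻‖ = (-t⁻)·‖v‖` and `‖p - p⁺‖ = t⁺·‖v‖`, so that
`F_C(p,v) = (‖v‖/2)·(1/‖p-p⁻‖ + 1/‖p-p⁺‖) = (1/2)·(1/(-t⁻) + 1/t⁺)`.
(When the chord is unbounded on one side, the corresponding term is `0`.) -/
noncomputable def finslerNorm {E : Type*} [NormedAddCommGroup E] [NormedSpace ℝ E]
    (C : Set E) (p v : E) : ℝ :=
  if v = 0 then 0
  else ((1 : ℝ) / 2) *
    (1 / (-sInf {t : ℝ | p + t • v ∈ C}) + 1 / sSup {t : ℝ | p + t • v ∈ C})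

/-!
At the point `p + t • (q - p)` of the segment from `p` to `q` the Finsler norm of `q - p` is
`(1 / (t - t⁻) + 1 / (t⁺ - t)) / 2`, which integrates over `[0, 1]` to half the logarithm of the
cross-ratio, so the segment has length `d_C(p, q)`.

Conversely, let `f₁ < c₁` and `f₂ < c₂` be supporting half-spaces of `C` at the points where the
line `pq` leaves `C` beyond `q` and beyond `p`. The function
`y ↦ (log (c₂ - f₂ y) - log (c₁ - f₁ y)) / 2` increases by exactly `d_C(p, q)` from `p` to `q`,
and its derivative at `x` in direction `v` is at most `F_C(x, v)`, because each hyperplane lies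
beyond the corresponding exit point of the line through `x` in direction `±v`. Integrating along
a piecewise `C¹` path bounds its length below by `d_C(p, q)`.

Integrability of `F_C` along a path comes from its continuity: `F_C(x, v)` is the symmetrization
of the Funk metric `1 / t⁺(x, v)`, and by convexity `t⁺` is continuous in `(x, v)`.
-/

open Set Filter Topology MeasureTheory
open scoped Pointwise

lemma IsOpen.lt_csSup_of_mem {α : Type*} [ConditionallyCompleteLinearOrder α]
    [TopologicalSpace α] [OrderTopology α] [DenselyOrdered α] [NoMaxOrder α] {S : Set α} {t : α}
    (hS : IsOpen S) (hb : BddAbove S) (ht : t ∈ S) : t < sSup S := by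
  obtain ⟨u, htu, hu⟩ := Eventually.exists_gt (hS.mem_nhds ht)
  exact htu.trans_le (le_csSup hb hu)

lemma IsOpen.csInf_lt_of_mem {α : Type*} [ConditionallyCompleteLinearOrder α]
    [TopologicalSpace α] [OrderTopology α] [DenselyOrdered α] [NoMinOrder α] {S : Set α} {t : α}
    (hS : IsOpen S) (hb : BddBelow S) (ht : t ∈ S) : sInf S < t := by
  obtain ⟨u, hut, hu⟩ := Eventually.exists_lt (hS.mem_nhds ht)
  exact (csInf_le hb hu).trans_lt hut

lemma intervalIntegral.sub_le_integral_of_partition {g φ : ℝ → ℝ} {m : ℕ}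
    {τ : Fin (m + 2) → ℝ}
    (hint : ∀ i : Fin (m + 1), IntervalIntegrable φ volume (τ i.castSucc) (τ i.succ))
    (hle : ∀ i : Fin (m + 1),
      g (τ i.succ) - g (τ i.castSucc) ≤ ∫ t in τ i.castSucc..τ i.succ, φ t) :
    g (τ (Fin.last (m + 1))) - g (τ 0) ≤ ∫ t in τ 0..τ (Fin.last (m + 1)), φ t := by
  set a : ℕ → ℝ := fun k => τ (Fin.clamp k (m + 1))
  have ha_castSucc (k : ℕ) (hk : k < m + 1) : a k = τ (Fin.castSucc ⟨k, hk⟩) :=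
    congrArg τ (Fin.ext (by simp [Fin.clamp]; omega))
  have ha_succ (k : ℕ) (hk : k < m + 1) : a (k + 1) = τ (Fin.succ ⟨k, hk⟩) :=
    congrArg τ (Fin.ext (by simp [Fin.clamp]; omega))
  have ha_zero : a 0 = τ 0 := ha_castSucc 0 m.succ_pos
  have ha_last : a (m + 1) = τ (Fin.last (m + 1)) := ha_succ m m.lt_succ_self
  calc g (τ (Fin.last (m + 1))) - g (τ 0) = g (a (m + 1)) - g (a 0) := by rw [ha_zero, ha_last]
    _ = ∑ k ∈ Finset.range (m + 1), (g (a (k + 1)) - g (a k)) :=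
      (Finset.sum_range_sub (fun k => g (a k)) _).symm
    _ ≤ ∑ k ∈ Finset.range (m + 1), ∫ t in a k..a (k + 1), φ t :=
      Finset.sum_le_sum fun k hk => by
        rw [ha_castSucc k (Finset.mem_range.1 hk), ha_succ k (Finset.mem_range.1 hk)]
        exact hle _
    _ = ∫ t in a 0..a (m + 1), φ t :=
      sum_integral_adjacent_intervals fun k hk => by
        rw [ha_castSucc k hk, ha_succ k hk]
        exact hint _
    _ = ∫ t in τ 0..τ (Fin.last (m + 1)), φ t := by rw [ha_zero, ha_last]

namespace HilbertGeometry

variable {E : Type*} [NormedAddCommGroup E] [NormedSpace ℝ E] {C : Set E} {x v p q : E}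

def chord (C : Set E) (x v : E) : Set ℝ := {t | x + t • v ∈ C}

/-- The Funk metric `‖v‖ / ‖x - x⁺‖` of `C`, where `x⁺ = x + t⁺ • v` is the exit point. -/
noncomputable def funkNorm (C : Set E) (x v : E) : ℝ := (sSup (chord C x v))⁻¹

lemma zero_mem_chord (hx : x ∈ C) : (0 : ℝ) ∈ chord C x v := by simpa [chord] using hx

lemma chord_zero (hx : x ∈ C) : chord C x 0 = univ :=
  eq_univ_of_forall fun _ => by simpa [chord] using hx

lemma chord_neg (C : Set E) (x v : E) : chord C x (-v) = -chord C x v := by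
  ext t; simp [chord]

lemma chord_add_smul (C : Set E) (x v : E) (t : ℝ) :
    chord C (x + t • v) v = chord C x v - ({t} : Set ℝ) := by
  ext s
  simp only [chord, sub_singleton, mem_image, mem_ofPred_eq]
  rw [show x + t • v + s • v = x + (s + t) • v by module]
  exact ⟨fun h => ⟨s + t, h, add_sub_cancel_right s t⟩, by rintro ⟨u, hu, rfl⟩; simpa using hu⟩

lemma isOpen_chord (hopen : IsOpen C) : IsOpen (chord C x v) :=
  hopen.preimage (by fun_prop)

lemma convex_chord (hconv : Convex ℝ C) : Convex ℝ (chord C x v) := by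
  intro s hs t ht a b ha hb hab
  show x + (a • s + b • t) • v ∈ C
  convert hconv hs ht ha hb hab using 1
  linear_combination (norm := module) (-hab) • x

lemma isBounded_chord (hbdd : Bornology.IsBounded C) (hv : v ≠ 0) :
    Bornology.IsBounded (chord C x v) := by
  obtain ⟨R, hR⟩ := isBounded_iff_forall_norm_le.1 hbdd
  refine isBounded_iff_forall_norm_le.2 ⟨(R + ‖x‖) / ‖v‖, fun t ht => ?_⟩
  rw [le_div_iff₀ (norm_pos_iff.2 hv), ← norm_smul]
  calc ‖t • v‖ = ‖(x + t • v) - x‖ := by rw [add_sub_cancel_left]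
    _ ≤ ‖x + t • v‖ + ‖x‖ := norm_sub_le _ _
    _ ≤ R + ‖x‖ := by gcongr; exact hR _ ht

lemma sSup_chord_pos (hopen : IsOpen C) (hbdd : Bornology.IsBounded C) (hx : x ∈ C)
    (hv : v ≠ 0) : 0 < sSup (chord C x v) :=
  (isOpen_chord hopen).lt_csSup_of_mem (isBounded_chord hbdd hv).bddAbove (zero_mem_chord hx)

lemma sInf_chord_neg (hopen : IsOpen C) (hbdd : Bornology.IsBounded C) (hx : x ∈ C)
    (hv : v ≠ 0) : sInf (chord C x v) < 0 :=
  (isOpen_chord hopen).csInf_lt_of_mem (isBounded_chord hbdd hv).bddBelow (zero_mem_chord hx)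

lemma one_lt_sSup_chord (hopen : IsOpen C) (hbdd : Bornology.IsBounded C) (hq : q ∈ C)
    (hpq : p ≠ q) : 1 < sSup (chord C p (q - p)) :=
  (isOpen_chord hopen).lt_csSup_of_mem (isBounded_chord hbdd (sub_ne_zero.2 hpq.symm)).bddAbove
    (by simpa [chord] using hq)

lemma add_sSup_chord_smul_notMem (hopen : IsOpen C) (hbdd : Bornology.IsBounded C)
    (hv : v ≠ 0) : x + sSup (chord C x v) • v ∉ C := fun h =>
  ((isOpen_chord hopen).lt_csSup_of_mem (isBounded_chord hbdd hv).bddAbove h).false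

lemma add_sInf_chord_smul_notMem (hopen : IsOpen C) (hbdd : Bornology.IsBounded C)
    (hv : v ≠ 0) : x + sInf (chord C x v) • v ∉ C := fun h =>
  ((isOpen_chord hopen).csInf_lt_of_mem (isBounded_chord hbdd hv).bddBelow h).false

lemma add_sSup_chord_smul_mem_closure (hbdd : Bornology.IsBounded C) (hx : x ∈ C)
    (hv : v ≠ 0) : x + sSup (chord C x v) • v ∈ closure C :=
  (by fun_prop : Continuous fun t : ℝ => x + t • v).closure_preimage_subset C
    (csSup_mem_closure ⟨0, zero_mem_chord hx⟩ (isBounded_chord hbdd hv).bddAbove)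

lemma sInf_chord_eq_neg_sSup (C : Set E) (x v : E) :
    sInf (chord C x v) = -sSup (chord C x (-v)) := by
  rw [chord_neg, Real.sInf_def]

lemma sSup_chord_add_smul (hbdd : Bornology.IsBounded C) (hx : x ∈ C) (hv : v ≠ 0) (t : ℝ) :
    sSup (chord C (x + t • v) v) = sSup (chord C x v) - t := by
  rw [chord_add_smul, csSup_sub ⟨0, zero_mem_chord hx⟩ (isBounded_chord hbdd hv).bddAbove
    (singleton_nonempty t) bddBelow_singleton, csInf_singleton]

lemma sInf_chord_add_smul (hbdd : Bornology.IsBounded C) (hx : x ∈ C) (hv : v ≠ 0) (t : ℝ) :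
    sInf (chord C (x + t • v) v) = sInf (chord C x v) - t := by
  rw [chord_add_smul, csInf_sub ⟨0, zero_mem_chord hx⟩ (isBounded_chord hbdd hv).bddBelow
    (singleton_nonempty t) bddAbove_singleton, csSup_singleton]

lemma sSup_chord_le_of_notMem (hconv : Convex ℝ C) (hx : x ∈ C) {c : ℝ} (hc : 0 ≤ c)
    (hcC : x + c • v ∉ C) : sSup (chord C x v) ≤ c :=
  csSup_le ⟨0, zero_mem_chord hx⟩ fun _ hs => le_of_not_ge fun hcs =>
    hcC ((convex_chord hconv).ordConnected.out (zero_mem_chord hx) hs ⟨hc, hcs⟩)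

lemma add_smul_notMem_closure_of_sSup_chord_lt (hconv : Convex ℝ C) (hopen : IsOpen C)
    (hbdd : Bornology.IsBounded C) (hx : x ∈ C) (hv : v ≠ 0) {c : ℝ}
    (hc : sSup (chord C x v) < c) : x + c • v ∉ closure C := by
  intro hcC
  obtain ⟨c', hc', hc'c⟩ := exists_between hc
  have hc'pos : 0 < c' := (sSup_chord_pos hopen hbdd hx hv).trans hc'
  have hcpos : 0 < c := hc'pos.trans hc'c
  have hmem : x + c' • v ∈ C := by
    rw [← hopen.interior_eq] at hx ⊢
    refine hconv.openSegment_interior_closure_subset_interior hx hcC ?_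
    rw [openSegment_eq_image']
    refine ⟨c' / c, ⟨by positivity, (div_lt_one hcpos).2 hc'c⟩, ?_⟩
    simp only [add_sub_cancel_left, smul_smul, div_mul_cancel₀ _ hcpos.ne']
  exact hc'.not_ge (le_csSup (isBounded_chord hbdd hv).bddAbove hmem)

lemma eventually_mem_chord (hopen : IsOpen C) {s : ℝ} (hs : s ∈ chord C x v) :
    ∀ᶠ z : E × E in 𝓝 (x, v), s ∈ chord C z.1 z.2 :=
  (by fun_prop : Continuous fun z : E × E => z.1 + s • z.2).continuousAt.eventually_mem
    (hopen.mem_nhds hs)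

lemma continuousAt_sSup_chord (hconv : Convex ℝ C) (hopen : IsOpen C)
    (hbdd : Bornology.IsBounded C) (hx : x ∈ C) (hv : v ≠ 0) :
    ContinuousAt (fun z : E × E => sSup (chord C z.1 z.2)) (x, v) := by
  refine tendsto_order.2 ⟨fun c hc => ?_, fun c hc => ?_⟩
  · obtain ⟨s, hs, hcs⟩ := exists_lt_of_lt_csSup ⟨0, zero_mem_chord hx⟩ hc
    filter_upwards [eventually_mem_chord hopen hs, continuousAt_snd.eventually_ne hv]
      with z hz hw
    exact hcs.trans_le (le_csSup (isBounded_chord hbdd hw).bddAbove hz)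
  · obtain ⟨c', hc', hc'c⟩ := exists_between hc
    have hout : ∀ᶠ z : E × E in 𝓝 (x, v), z.1 + c' • z.2 ∈ (closure C)ᶜ :=
      (by fun_prop : Continuous fun z : E × E => z.1 + c' • z.2).continuousAt.eventually_mem
        (isClosed_closure.isOpen_compl.mem_nhds
          (add_smul_notMem_closure_of_sSup_chord_lt hconv hopen hbdd hx hv hc'))
    filter_upwards [hout, continuousAt_fst.eventually_mem (x := (x, v)) (hopen.mem_nhds hx)]
      with z hz hzC
    refine (sSup_chord_le_of_notMem hconv hzC ?_ fun h => hz (subset_closure h)).trans_lt hc'c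
    exact (sSup_chord_pos hopen hbdd hx hv).le.trans hc'.le

lemma funkNorm_nonneg (hx : x ∈ C) : 0 ≤ funkNorm C x v :=
  inv_nonneg.2 (Real.sSup_nonneg' ⟨0, zero_mem_chord hx, le_rfl⟩)

lemma funkNorm_zero (hx : x ∈ C) : funkNorm C x 0 = 0 := by
  rw [funkNorm, chord_zero hx, Real.sSup_univ, inv_zero]

lemma continuousAt_funkNorm (hconv : Convex ℝ C) (hopen : IsOpen C)
    (hbdd : Bornology.IsBounded C) (hx : x ∈ C) (v : E) :
    ContinuousAt (fun z : E × E => funkNorm C z.1 z.2) (x, v) := by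
  rcases eq_or_ne v 0 with rfl | hv
  · have hC_near := continuousAt_fst.eventually_mem (x := (x, (0 : E))) (hopen.mem_nhds hx)
    show Tendsto _ _ (𝓝 (funkNorm C x 0))
    rw [funkNorm_zero hx]
    refine tendsto_order.2 ⟨fun c hc => ?_, fun c hc => ?_⟩
    · filter_upwards [hC_near] with z hz
      exact hc.trans_le (funkNorm_nonneg hz)
    · have hs : c⁻¹ + 1 ∈ chord C x 0 := by simp [chord_zero hx]
      filter_upwards [eventually_mem_chord hopen hs, hC_near] with z hzs hz
      rcases eq_or_ne z.2 0 with hw | hw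
      · rwa [hw, funkNorm_zero hz]
      · exact inv_lt_of_inv_lt₀ hc
          ((lt_add_one _).trans_le (le_csSup (isBounded_chord hbdd hw).bddAbove hzs))
  · exact (continuousAt_sSup_chord hconv hopen hbdd hx hv).inv₀
      (sSup_chord_pos hopen hbdd hx hv).ne'

lemma finslerNorm_eq_funkNorm (hx : x ∈ C) (v : E) :
    finslerNorm C x v = (funkNorm C x (-v) + funkNorm C x v) / 2 := by
  rcases eq_or_ne v 0 with rfl | hv
  · simp [finslerNorm, funkNorm_zero hx]
  rw [finslerNorm, if_neg hv]
  change 1 / 2 * (1 / -sInf (chord C x v) + 1 / sSup (chord C x v)) = _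
  rw [sInf_chord_eq_neg_sSup, neg_neg, funkNorm, funkNorm]
  ring

lemma finslerNorm_nonneg (hx : x ∈ C) (v : E) : 0 ≤ finslerNorm C x v := by
  rw [finslerNorm_eq_funkNorm hx]
  exact div_nonneg (add_nonneg (funkNorm_nonneg hx) (funkNorm_nonneg hx)) zero_le_two

lemma continuousOn_finslerNorm (hconv : Convex ℝ C) (hopen : IsOpen C)
    (hbdd : Bornology.IsBounded C) {α : Type*} [TopologicalSpace α] {σ w : α → E} {S : Set α}
    (hσ : ContinuousOn σ S) (hw : ContinuousOn w S) (hσC : ∀ t ∈ S, σ t ∈ C) :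
    ContinuousOn (fun t => finslerNorm C (σ t) (w t)) S := by
  intro t ht
  have hfunk := continuousAt_funkNorm hconv hopen hbdd (hσC t ht)
  have hsum := ((hfunk _).comp_continuousWithinAt (f := fun s => (σ s, -w s))
    ((hσ t ht).prodMk (hw t ht).neg)).add
    ((hfunk _).comp_continuousWithinAt (f := fun s => (σ s, w s)) ((hσ t ht).prodMk (hw t ht)))
  exact (hsum.div_const 2).congr (fun s hs => finslerNorm_eq_funkNorm (hσC s hs) _)
    (finslerNorm_eq_funkNorm (hσC t ht) _)

lemma integrableOn_finslerNorm_deriv (hconv : Convex ℝ C) (hopen : IsOpen C)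
    (hbdd : Bornology.IsBounded C) {σ : ℝ → E} {a b : ℝ} (hab : a < b)
    (hσC : ∀ t ∈ Icc a b, σ t ∈ C) (hσ : ContDiffOn ℝ 1 σ (Icc a b)) :
    IntegrableOn (fun t => finslerNorm C (σ t) (deriv σ t)) (Icc a b) := by
  have hcont := continuousOn_finslerNorm hconv hopen hbdd hσ.continuousOn
    (hσ.continuousOn_derivWithin (uniqueDiffOn_Icc hab) le_rfl) hσC
  rw [integrableOn_Icc_iff_integrableOn_Ioo]
  refine (hcont.integrableOn_Icc.mono_set Ioo_subset_Icc_self).congr_fun (fun t ht => ?_)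
    measurableSet_Ioo
  dsimp only
  rw [derivWithin_of_mem_nhds (Icc_mem_nhds ht.1 ht.2)]

lemma div_le_funkNorm (hopen : IsOpen C) (hbdd : Bornology.IsBounded C) {f : E →L[ℝ] ℝ}
    {c : ℝ} (hf : ∀ y ∈ C, f y < c) (hx : x ∈ C) (v : E) :
    f v / (c - f x) ≤ funkNorm C x v := by
  rcases eq_or_ne v 0 with rfl | hv
  · simp [funkNorm_zero hx]
  have hβ := sSup_chord_pos hopen hbdd hx hv
  have hexit : f (x + sSup (chord C x v) • v) ≤ c :=
    closure_minimal (fun y hy => (hf y hy).le) (isClosed_le f.continuous continuous_const)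
      (add_sSup_chord_smul_mem_closure hbdd hx hv)
  rw [map_add, map_smul, smul_eq_mul] at hexit
  rw [funkNorm, div_le_iff₀ (sub_pos.2 (hf x hx)), inv_mul_eq_div, le_div_iff₀ hβ]
  linarith

lemma div_sub_div_le_finslerNorm (hopen : IsOpen C) (hbdd : Bornology.IsBounded C)
    {f₁ f₂ : E →L[ℝ] ℝ} {c₁ c₂ : ℝ} (hf₁ : ∀ y ∈ C, f₁ y < c₁) (hf₂ : ∀ y ∈ C, f₂ y < c₂)
    (hx : x ∈ C) (v : E) :
    (f₁ v / (c₁ - f₁ x) - f₂ v / (c₂ - f₂ x)) / 2 ≤ finslerNorm C x v := by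
  have h₁ := div_le_funkNorm hopen hbdd hf₁ hx v
  have h₂ := div_le_funkNorm hopen hbdd hf₂ hx (-v)
  rw [map_neg, neg_div] at h₂
  rw [finslerNorm_eq_funkNorm hx]
  linarith

noncomputable def supportLogRatio (f₁ : E →L[ℝ] ℝ) (c₁ : ℝ) (f₂ : E →L[ℝ] ℝ) (c₂ : ℝ)
    (y : E) : ℝ :=
  (Real.log (c₂ - f₂ y) - Real.log (c₁ - f₁ y)) / 2

lemma hasDerivAt_supportLogRatio_comp {f₁ f₂ : E →L[ℝ] ℝ} {c₁ c₂ : ℝ} {σ : ℝ → E} {w : E}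
    {t : ℝ} (hσ : HasDerivAt σ w t) (h₁ : f₁ (σ t) < c₁) (h₂ : f₂ (σ t) < c₂) :
    HasDerivAt (fun s => supportLogRatio f₁ c₁ f₂ c₂ (σ s))
      ((f₁ w / (c₁ - f₁ (σ t)) - f₂ w / (c₂ - f₂ (σ t))) / 2) t := by
  have d₁ := ((f₁.hasFDerivAt.comp_hasDerivAt t hσ).const_sub c₁).log (sub_pos.2 h₁).ne'
  have d₂ := ((f₂.hasFDerivAt.comp_hasDerivAt t hσ).const_sub c₂).log (sub_pos.2 h₂).ne'
  refine ((d₂.sub d₁).div_const 2).congr_deriv ?_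
  simp only [Function.comp_apply]
  ring

lemma supportLogRatio_sub_le_integral (hconv : Convex ℝ C) (hopen : IsOpen C)
    (hbdd : Bornology.IsBounded C) {f₁ f₂ : E →L[ℝ] ℝ} {c₁ c₂ : ℝ}
    (hf₁ : ∀ y ∈ C, f₁ y < c₁) (hf₂ : ∀ y ∈ C, f₂ y < c₂) {σ : ℝ → E} {a b : ℝ} (hab : a < b)
    (hσC : ∀ t ∈ Icc a b, σ t ∈ C) (hσ : ContDiffOn ℝ 1 σ (Icc a b)) :
    supportLogRatio f₁ c₁ f₂ c₂ (σ b) - supportLogRatio f₁ c₁ f₂ c₂ (σ a) ≤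
      ∫ t in a..b, finslerNorm C (σ t) (deriv σ t) := by
  have hlog (f : E →L[ℝ] ℝ) (c : ℝ) (hf : ∀ y ∈ C, f y < c) :
      ContinuousOn (fun t => Real.log (c - f (σ t))) (Icc a b) :=
    (continuousOn_const.sub (f.continuous.comp_continuousOn hσ.continuousOn)).log
      fun t ht => (sub_pos.2 (hf _ (hσC t ht))).ne'
  refine intervalIntegral.sub_le_integral_of_hasDeriv_right_of_le hab.le
    (((hlog f₂ c₂ hf₂).sub (hlog f₁ c₁ hf₁)).div_const 2) (fun t ht => ?_)
    (integrableOn_finslerNorm_deriv hconv hopen hbdd hab hσC hσ) fun t ht =>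
      div_sub_div_le_finslerNorm hopen hbdd hf₁ hf₂ (hσC t (Ioo_subset_Icc_self ht)) _
  have hσt := ((hσ.differentiableOn one_ne_zero t (Ioo_subset_Icc_self ht)).differentiableAt
    (Icc_mem_nhds ht.1 ht.2)).hasDerivAt
  have hσt_mem := hσC t (Ioo_subset_Icc_self ht)
  exact (hasDerivAt_supportLogRatio_comp hσt (hf₁ _ hσt_mem) (hf₂ _ hσt_mem)).hasDerivWithinAt

lemma supportLogRatio_sub_le_length (hconv : Convex ℝ C) (hopen : IsOpen C)
    (hbdd : Bornology.IsBounded C) {f₁ f₂ : E →L[ℝ] ℝ} {c₁ c₂ : ℝ}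
    (hf₁ : ∀ y ∈ C, f₁ y < c₁) (hf₂ : ∀ y ∈ C, f₂ y < c₂) {σ : ℝ → E}
    (hσC : ∀ t ∈ Icc (0 : ℝ) 1, σ t ∈ C) {m : ℕ} {τ : Fin (m + 2) → ℝ} (hτ : StrictMono τ)
    (hτ0 : τ 0 = 0) (hτ1 : τ (Fin.last (m + 1)) = 1)
    (hσ : ∀ i : Fin (m + 1), ContDiffOn ℝ 1 σ (Icc (τ i.castSucc) (τ i.succ))) :
    supportLogRatio f₁ c₁ f₂ c₂ (σ 1) - supportLogRatio f₁ c₁ f₂ c₂ (σ 0) ≤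
      ∫ t in (0 : ℝ)..1, finslerNorm C (σ t) (deriv σ t) := by
  have hlt (i : Fin (m + 1)) : τ i.castSucc < τ i.succ := hτ Fin.castSucc_lt_succ
  have hσC' (i : Fin (m + 1)) : ∀ t ∈ Icc (τ i.castSucc) (τ i.succ), σ t ∈ C := fun t ht =>
    hσC t ⟨hτ0 ▸ (hτ.monotone (Fin.zero_le _)).trans ht.1,
      ht.2.trans (hτ1 ▸ hτ.monotone (Fin.le_last _))⟩
  have := intervalIntegral.sub_le_integral_of_partition
    (g := fun t => supportLogRatio f₁ c₁ f₂ c₂ (σ t))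
    (fun i => (intervalIntegrable_iff_integrableOn_Icc_of_le (hlt i).le).2
      (integrableOn_finslerNorm_deriv hconv hopen hbdd (hlt i) (hσC' i) (hσ i)))
    (fun i => supportLogRatio_sub_le_integral hconv hopen hbdd hf₁ hf₂ (hlt i) (hσC' i) (hσ i))
  rwa [hτ0, hτ1] at this

-- `Real.log` is even, so the negative arguments involving `sInf` are harmless.
lemma hilbertDist_eq_of_ne (hopen : IsOpen C) (hbdd : Bornology.IsBounded C) (hp : p ∈ C)
    (hq : q ∈ C) (hpq : p ≠ q) :
    hilbertDist C p q =
      ((Real.log (sInf (chord C p (q - p)) - 1) - Real.log (sInf (chord C p (q - p)))) -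
        (Real.log (sSup (chord C p (q - p)) - 1) - Real.log (sSup (chord C p (q - p))))) / 2 := by
  have hα := sInf_chord_neg hopen hbdd hp (sub_ne_zero.2 hpq.symm)
  have hβ := one_lt_sSup_chord hopen hbdd hq hpq
  rw [hilbertDist, if_neg hpq]
  change 1 / 2 * Real.log ((1 - sInf (chord C p (q - p))) / -sInf (chord C p (q - p)) *
    (sSup (chord C p (q - p)) / (sSup (chord C p (q - p)) - 1))) = _
  set α := sInf (chord C p (q - p))
  set β := sSup (chord C p (q - p))
  rw [Real.log_mul (div_pos (by linarith) (by linarith)).ne'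
      (div_pos (by linarith) (by linarith)).ne',
    Real.log_div (by linarith) (by linarith), Real.log_div (by linarith) (by linarith),
    Real.log_neg_eq_log, show 1 - α = -(α - 1) by ring, Real.log_neg_eq_log]
  ring

lemma log_sub_log_along_line (f : E →L[ℝ] ℝ) {s : ℝ} (hs : s ≠ 0) (hs1 : s ≠ 1)
    (hf : f (q - p) ≠ 0) :
    Real.log (f (p + s • (q - p)) - f q) - Real.log (f (p + s • (q - p)) - f p) =
      Real.log (s - 1) - Real.log s := by
  have hq : f (p + s • (q - p)) - f q = (s - 1) * f (q - p) := by
    simp only [map_add, map_smul, map_sub, smul_eq_mul]; ring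
  have hp : f (p + s • (q - p)) - f p = s * f (q - p) := by
    simp only [map_add, map_smul, smul_eq_mul]; ring
  rw [hq, hp, Real.log_mul (sub_ne_zero.2 hs1) hf, Real.log_mul hs hf]
  ring

lemma hilbertDist_le_length (hconv : Convex ℝ C) (hopen : IsOpen C)
    (hbdd : Bornology.IsBounded C) {σ : ℝ → E} (hσC : ∀ t ∈ Icc (0 : ℝ) 1, σ t ∈ C) {m : ℕ}
    {τ : Fin (m + 2) → ℝ} (hτ : StrictMono τ) (hτ0 : τ 0 = 0) (hτ1 : τ (Fin.last (m + 1)) = 1)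
    (hσ : ∀ i : Fin (m + 1), ContDiffOn ℝ 1 σ (Icc (τ i.castSucc) (τ i.succ))) :
    hilbertDist C (σ 0) (σ 1) ≤ ∫ t in (0 : ℝ)..1, finslerNorm C (σ t) (deriv σ t) := by
  set p := σ 0
  set q := σ 1
  have hp : p ∈ C := hσC 0 (left_mem_Icc.2 zero_le_one)
  have hq : q ∈ C := hσC 1 (right_mem_Icc.2 zero_le_one)
  rcases eq_or_ne p q with hpq | hpq
  · rw [hilbertDist, if_pos hpq]
    exact intervalIntegral.integral_nonneg zero_le_one fun t ht =>
      finslerNorm_nonneg (hσC t ht) _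
  have hv : q - p ≠ 0 := sub_ne_zero.2 hpq.symm
  have hα := sInf_chord_neg hopen hbdd hp hv
  have hβ := one_lt_sSup_chord hopen hbdd hq hpq
  obtain ⟨f₁, hf₁⟩ := geometric_hahn_banach_open_point hconv hopen
    (add_sSup_chord_smul_notMem (x := p) hopen hbdd hv)
  obtain ⟨f₂, hf₂⟩ := geometric_hahn_banach_open_point hconv hopen
    (add_sInf_chord_smul_notMem (x := p) hopen hbdd hv)
  have hf₁v : f₁ (q - p) ≠ 0 := fun h => (hf₁ p hp).ne (by simp [h])
  have hf₂v : f₂ (q - p) ≠ 0 := fun h => (hf₂ p hp).ne (by simp [h])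
  have e₁ := log_sub_log_along_line f₁ (by linarith) hβ.ne' hf₁v
  have e₂ := log_sub_log_along_line f₂ hα.ne (by linarith) hf₂v
  have hlength := supportLogRatio_sub_le_length hconv hopen hbdd hf₁ hf₂ hσC hτ hτ0 hτ1 hσ
  rw [hilbertDist_eq_of_ne hopen hbdd hp hq hpq]
  simp only [supportLogRatio] at hlength
  linarith

lemma finslerNorm_add_smul (hbdd : Bornology.IsBounded C) (hx : x ∈ C) (hv : v ≠ 0) (t : ℝ) :
    finslerNorm C (x + t • v) v =
      ((t - sInf (chord C x v))⁻¹ + (sSup (chord C x v) - t)⁻¹) / 2 := by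
  rw [finslerNorm, if_neg hv]
  change 1 / 2 * (1 / -sInf (chord C (x + t • v) v) + 1 / sSup (chord C (x + t • v) v)) = _
  rw [sInf_chord_add_smul hbdd hx hv, sSup_chord_add_smul hbdd hx hv]
  ring

lemma integral_finslerNorm_segment (hopen : IsOpen C) (hbdd : Bornology.IsBounded C)
    (hp : p ∈ C) (hq : q ∈ C) :
    ∫ t in (0 : ℝ)..1, finslerNorm C (p + t • (q - p)) (deriv (fun t => p + t • (q - p)) t) =
      hilbertDist C p q := by
  have hderiv (t : ℝ) : HasDerivAt (fun t => p + t • (q - p)) (q - p) t := by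
    simpa using ((hasDerivAt_id t).smul_const (q - p)).const_add p
  simp_rw [(hderiv _).deriv]
  rcases eq_or_ne p q with rfl | hpq
  · simp [hilbertDist, finslerNorm]
  have hv : q - p ≠ 0 := sub_ne_zero.2 hpq.symm
  simp_rw [finslerNorm_add_smul hbdd hp hv]
  rw [hilbertDist_eq_of_ne hopen hbdd hp hq hpq]
  have hα := sInf_chord_neg hopen hbdd hp hv
  have hβ := one_lt_sSup_chord hopen hbdd hq hpq
  set α := sInf (chord C p (q - p))
  set β := sSup (chord C p (q - p))
  have hα_lt {t : ℝ} (ht : t ∈ uIcc 0 1) : α < t := by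
    rw [uIcc_of_le zero_le_one] at ht; linarith [ht.1]
  have hβ_gt {t : ℝ} (ht : t ∈ uIcc 0 1) : t < β := by
    rw [uIcc_of_le zero_le_one] at ht; linarith [ht.2]
  -- `α - t < 0` here, but `Real.log` is even.
  have hG : ∀ t ∈ uIcc (0 : ℝ) 1,
      HasDerivAt (fun t => (Real.log (α - t) - Real.log (β - t)) / 2)
        (((t - α)⁻¹ + (β - t)⁻¹) / 2) t := fun t ht => by
    refine ((((hasDerivAt_id t).const_sub α).log (sub_neg.2 (hα_lt ht)).ne).sub
      (((hasDerivAt_id t).const_sub β).log (sub_pos.2 (hβ_gt ht)).ne')).div_const 2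
      |>.congr_deriv ?_
    rw [id, show α - t = -(t - α) by ring, div_neg]
    ring
  have hint : IntervalIntegrable (fun t => ((t - α)⁻¹ + (β - t)⁻¹) / 2) volume 0 1 :=
    ContinuousOn.intervalIntegrable
      ((((continuousOn_id.sub continuousOn_const).inv₀ fun t ht =>
        (sub_pos.2 (hα_lt ht)).ne').add
        ((continuousOn_const.sub continuousOn_id).inv₀ fun t ht =>
          (sub_pos.2 (hβ_gt ht)).ne')).div_const 2)
  rw [intervalIntegral.integral_eq_sub_of_hasDerivAt hG hint]
  simp only [sub_zero]
  ring

end HilbertGeometry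

/-- The Hilbert distance of a bounded open convex set `C ⊆ ℝⁿ` is the length
distance associated to its Finsler metric: `d_C(p,q)` is the infimum of the lengths
`∫₀¹ F_C(σ(t), σ'(t)) dt` over all piecewise `C¹` paths `σ : [0,1] → C` from `p` to `q`. -/
theorem hilbertDist_eq_length_distance {n : ℕ} (C : Set (EuclideanSpace ℝ (Fin n)))
    (hconv : Convex ℝ C) (hopen : IsOpen C) (hbdd : Bornology.IsBounded C)
    (p q : EuclideanSpace ℝ (Fin n)) (hp : p ∈ C) (hq : q ∈ C) :
    hilbertDist C p q = sInf {L : ℝ |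
      ∃ σ : ℝ → EuclideanSpace ℝ (Fin n),
        σ 0 = p ∧ σ 1 = q ∧
        (∀ t ∈ Set.Icc (0 : ℝ) 1, σ t ∈ C) ∧
        ContinuousOn σ (Set.Icc (0 : ℝ) 1) ∧
        (∃ (m : ℕ) (τ : Fin (m + 2) → ℝ), StrictMono τ ∧ τ 0 = 0 ∧ τ (Fin.last (m + 1)) = 1 ∧
          ∀ i : Fin (m + 1), ContDiffOn ℝ 1 σ (Set.Icc (τ i.castSucc) (τ i.succ))) ∧
        L = ∫ t in (0 : ℝ)..1, finslerNorm C (σ t) (deriv σ t)} := by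
  refine (IsLeast.csInf_eq ⟨?_, ?_⟩).symm
  · refine ⟨fun t => p + t • (q - p), by simp, by simp,
      fun t ht => hconv.add_smul_sub_mem hp hq ht, by fun_prop,
      ⟨0, ![0, 1], by simp [Fin.strictMono_iff_lt_succ], rfl, rfl, fun _ => by fun_prop⟩,
      (HilbertGeometry.integral_finslerNorm_segment hopen hbdd hp hq).symm⟩
  · rintro L ⟨σ, rfl, rfl, hσC, -, ⟨m, τ, hτ, hτ0, hτ1, hσ⟩, rfl⟩
    exact HilbertGeometry.hilbertDist_le_length hconv hopen hbdd hσC hτ hτ0 hτ1 hσ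
end
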